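/- arXiv:2403.06562 — 7 statements merged into one kernel-verified Lean document; each statement's English description precedes it below -/
import Mathlib

section
/- Let n ≥ 3 be an integer and fix a sign σ ∈ {+1, −1}. A differentiable function f : (1,∞) → ℝ satisfies the ordinary differential equation f'(x) − ((n−1)/x) f(x) = σ √(x^{n−2}/(x^{n−2}−1)) for all x > 1 if and only if there exists λ ∈ ℝ such that f(x) = (2/(n−2)) (λ + σ √((x^{n−2}−1)/x^{n−2})) x^{n−1} for all x > 1. -/
open Set Filter Topology

/-! Multiplying by the integrating factor `x^{-(n-1)}` turns the equation into
`(f(x) / x^{n-1})' = σ √(x^m / (x^m - 1)) / x^{m+1}` with `m = n - 2`, and the right-hand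
side is the derivative of `(2σ/m) √(1 - x^{-m})`. So `f` solves the equation exactly when
`f(x) / x^{n-1} - (2σ/m) √(1 - x^{-m})` has vanishing derivative on the connected set
`(1, ∞)`, i.e. exactly when it is constant there. -/

theorem hasDerivAt_div_pow_sub {f G : ℝ → ℝ} {g x : ℝ} (k : ℕ) (hx : x ≠ 0)
    (hf : DifferentiableAt ℝ f x) (hG : HasDerivAt G (g / x ^ k) x) :
    HasDerivAt (fun y => f y / y ^ k - G y) ((deriv f x - k / x * f x - g) / x ^ k) x := by
  refine ((hf.hasDerivAt.fun_div (hasDerivAt_pow k x) (pow_ne_zero k hx)).fun_sub hG).congr_deriv ?_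
  rcases k with _ | k
  · simp
  · simp only [Nat.add_sub_cancel, pow_succ]
    field_simp

theorem deriv_sub_div_mul_eq_iff_exists_eq_mul_pow {f G g : ℝ → ℝ} {s : Set ℝ} (k : ℕ)
    (hs : IsOpen s) (hs' : IsPreconnected s) (h0 : (0 : ℝ) ∉ s)
    (hf : ∀ x ∈ s, DifferentiableAt ℝ f x)
    (hG : ∀ x ∈ s, HasDerivAt G (g x / x ^ k) x) :
    (∀ x ∈ s, deriv f x - k / x * f x = g x) ↔
      ∃ c, ∀ x ∈ s, f x = (c + G x) * x ^ k := by
  have hx0 : ∀ x ∈ s, x ^ k ≠ 0 := fun x hx => pow_ne_zero k fun h => h0 (h ▸ hx)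
  have hφ : ∀ x ∈ s, HasDerivAt (fun y => f y / y ^ k - G y)
      ((deriv f x - k / x * f x - g x) / x ^ k) x := fun x hx =>
    hasDerivAt_div_pow_sub k (fun h => h0 (h ▸ hx)) (hf x hx) (hG x hx)
  have hsol : ∀ c, ∀ x ∈ s, f x = (c + G x) * x ^ k ↔ f x / x ^ k - G x = c := by
    intro c x hx
    rw [sub_eq_iff_eq_add, div_eq_iff (hx0 x hx)]
  constructor
  · intro hode
    obtain ⟨c, hc⟩ := hs.exists_is_const_of_deriv_eq_zero hs'
      (fun x hx => (hφ x hx).differentiableAt.differentiableWithinAt)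
      (fun x hx => by simp [(hφ x hx).deriv, hode x hx])
    exact ⟨c, fun x hx => (hsol c x hx).2 (hc x hx)⟩
  · rintro ⟨c, hc⟩ x hx
    have hconst : (fun y => f y / y ^ k - G y) =ᶠ[𝓝 x] fun _ => c :=
      eventually_of_mem (hs.mem_nhds hx) fun y hy => (hsol c y hy).1 (hc y hy)
    have hzero := (hφ x hx).unique ((hasDerivAt_const x c).congr_of_eventuallyEq hconst)
    rw [div_eq_zero_iff, or_iff_left (hx0 x hx), sub_eq_zero] at hzero
    exact hzero

theorem hasDerivAt_sqrt_one_sub_inv_pow {m : ℕ} (hm : m ≠ 0) {x : ℝ} (hx : 1 < x) :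
    HasDerivAt (fun y => 2 / m * √((y ^ m - 1) / y ^ m))
      (√(x ^ m / (x ^ m - 1)) / x ^ (m + 1)) x := by
  have hxm : 1 < x ^ m := one_lt_pow₀ hx hm
  have hu : 0 < 1 - (x ^ m)⁻¹ := sub_pos.2 (inv_lt_one_of_one_lt₀ hxm)
  have hinv : HasDerivAt (fun y => 1 - (y ^ m)⁻¹) (m * x ^ (m - 1) / (x ^ m) ^ 2) x := by
    simpa [neg_div] using ((hasDerivAt_pow m x).inv (by positivity)).const_sub 1
  have heq : (fun y => 2 / m * √((y ^ m - 1) / y ^ m)) =ᶠ[𝓝 x]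
      fun y => 2 / m * √(1 - (y ^ m)⁻¹) := by
    filter_upwards [isOpen_Ioi.mem_nhds (show x ∈ Ioi 0 by simp; linarith)] with y hy
    rw [sub_div, div_self (pow_ne_zero m (ne_of_gt hy)), one_div]
  refine (((hinv.sqrt hu.ne').const_mul (2 / (m : ℝ))).congr_of_eventuallyEq heq).congr_deriv ?_
  have hsqrt : √(x ^ m / (x ^ m - 1)) = (√(1 - (x ^ m)⁻¹))⁻¹ := by
    rw [← Real.sqrt_inv]
    congr 1
    field_simp
  rw [hsqrt]
  have hs : 0 < √(1 - (x ^ m)⁻¹) := Real.sqrt_pos.2 hu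
  generalize √(1 - (x ^ m)⁻¹) = s at hs ⊢
  have : (m : ℝ) ≠ 0 := by exact_mod_cast hm
  field_simp
  rw [← pow_add, ← pow_mul]
  congr 1
  omega

theorem ode_general_solution_general (n : ℕ) (hn : 3 ≤ n) (σ : ℝ)
    (f : ℝ → ℝ) (hf : ∀ x ∈ Set.Ioi (1 : ℝ), DifferentiableAt ℝ f x) :
    (∀ x ∈ Set.Ioi (1 : ℝ),
        deriv f x - ((n : ℝ) - 1) / x * f x
          = σ * Real.sqrt (x ^ (n - 2) / (x ^ (n - 2) - 1)))
      ↔ ∃ l : ℝ, ∀ x ∈ Set.Ioi (1 : ℝ),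
          f x = 2 / ((n : ℝ) - 2)
              * (l + σ * Real.sqrt ((x ^ (n - 2) - 1) / x ^ (n - 2))) * x ^ (n - 1) := by
  obtain ⟨m, rfl⟩ : ∃ m, n = m + 2 := ⟨n - 2, by omega⟩
  have hm : (m : ℝ) ≠ 0 := by exact_mod_cast (show m ≠ 0 by omega)
  have hcast1 : ((m + 2 : ℕ) : ℝ) - 1 = (m + 1 : ℕ) := by push_cast; ring
  have hcast2 : ((m + 2 : ℕ) : ℝ) - 2 = m := by push_cast; ring
  simp only [Nat.add_sub_cancel, show m + 2 - 1 = m + 1 by omega, hcast1, hcast2]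
  rw [deriv_sub_div_mul_eq_iff_exists_eq_mul_pow (m + 1) isOpen_Ioi isPreconnected_Ioi (by simp) hf
    (G := fun y => σ * (2 / m * √((y ^ m - 1) / y ^ m))) fun x hx => by
      simpa only [mul_div_assoc] using
        (hasDerivAt_sqrt_one_sub_inv_pow (by omega) hx).const_mul σ]
  constructor
  · rintro ⟨c, hc⟩
    refine ⟨m / 2 * c, fun x hx => ?_⟩
    rw [hc x hx]
    field_simp
  · rintro ⟨l, hl⟩
    refine ⟨2 / m * l, fun x hx => ?_⟩
    rw [hl x hx]
    ring

/-- Let `n ≥ 3` be an integer and fix a sign `σ ∈ {+1, −1}`. A differentiable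
function `f : (1,∞) → ℝ` satisfies `f'(x) − ((n−1)/x) f(x) = σ √(x^(n−2)/(x^(n−2)−1))`
for all `x > 1` if and only if there exists `λ ∈ ℝ` such that
`f(x) = (2/(n−2)) (λ + σ √((x^(n−2)−1)/x^(n−2))) x^(n−1)` for all `x > 1`. -/
theorem ode_general_solution (n : ℕ) (hn : 3 ≤ n) (σ : ℝ) (hσ : σ = 1 ∨ σ = -1)
    (f : ℝ → ℝ) (hf : ∀ x ∈ Set.Ioi (1 : ℝ), DifferentiableAt ℝ f x) :
    (∀ x ∈ Set.Ioi (1 : ℝ),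
        deriv f x - ((n : ℝ) - 1) / x * f x
          = σ * Real.sqrt (x ^ (n - 2) / (x ^ (n - 2) - 1)))
      ↔ ∃ l : ℝ, ∀ x ∈ Set.Ioi (1 : ℝ),
          f x = 2 / ((n : ℝ) - 2)
              * (l + σ * Real.sqrt ((x ^ (n - 2) - 1) / x ^ (n - 2))) * x ^ (n - 1) :=
  ode_general_solution_general n hn σ f hf
end

section
/- Let n ≥ 3 be an integer. The constant ((n−2)/2)² in the Schwarzschild Hardy inequality is sharp: for every c > 0 such that ∫₁^∞ g'(r)² r^{n−1} √((r^{n−2}−1)/r^{n−2}) dr ≥ c ∫₁^∞ (g(r)²/δ(r)²) r^{n−1} √(r^{n−2}/(r^{n−2}−1)) dr holds for all locally absolutely continuous g : (1,∞) → ℝ with g(r)(r−1)^{−1/4} → 0 as r → 1⁺ and g(r) r^{−(n−2)/2} → 0 as r → ∞, one has c ≤ ((n−2)/2)². Equivalently, for every ε > 0 there exists such an admissible function g, not identically zero, with ∫₁^∞ g'² r^{n−1} √((r^{n−2}−1)/r^{n−2}) dr < (((n−2)/2)² + ε) ∫₁^∞ (g²/δ²) r^{n−1} √(r^{n−2}/(r^{n−2}−1))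 dr. -/
open MeasureTheory Filter

noncomputable def schR (n : ℕ) : ℝ := ((4 : ℝ) / 3) ^ (((n : ℝ) - 2)⁻¹)

/-- The weight function `δ` of the Schwarzschild Hardy inequality. -/
noncomputable def schDelta (n : ℕ) (r : ℝ) : ℝ :=
  if r < schR n then 2 * r ^ (n - 1) * Real.sqrt ((r ^ (n - 2) - 1) / r ^ (n - 2))
  else 2 * r ^ (n - 1) * (1 - Real.sqrt ((r ^ (n - 2) - 1) / r ^ (n - 2)))

/-!
The test functions `g(r) = (r - 1) r^(-(α + 1))` with `α = (n - 2)/2 + ε/2` are admissible.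
Bounding the root in the left weight by `1` gives `∫ g'² … ≤ α²/ε + 1/(2 + ε)`. For `r ≥ 4/3`
one has `δ(r) = 2r / (1 + √(1 - r^(2-n)))`, so on `(r₀, ∞)` the right integrand is at least
`K(r₀) r^(-1-ε)` with `K(r₀) → 1`, and the right integral is at least `K(r₀) r₀^(-ε)/ε`.
Multiplying the Hardy inequality by `ε` gives `c K(r₀) r₀^(-ε) ≤ α² + ε/(2 + ε)`; let `ε → 0`,
then `r₀ → ∞`.
-/

open Set Topology

section SqrtFactor

variable {x y : ℝ}

lemma sqrt_sub_one_div_self_le_one (hx : 0 ≤ x) : √((x - 1) / x) ≤ 1 :=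
  Real.sqrt_le_one.mpr (div_le_one_of_le₀ (by linarith) hx)

lemma one_le_sqrt_div_sub_one (hx : 1 < x) : 1 ≤ √(x / (x - 1)) :=
  Real.one_le_sqrt.mpr ((one_le_div (by linarith)).mpr (by linarith))

lemma sqrt_sub_one_div_self_mono (hx : 0 < x) (hxy : x ≤ y) :
    √((x - 1) / x) ≤ √((y - 1) / y) := by
  have hy : 0 < y := hx.trans_le hxy
  apply Real.sqrt_le_sqrt
  rw [sub_div, sub_div, div_self hx.ne', div_self hy.ne']
  gcongr

lemma one_sub_sqrt_sub_one_div_self (hx : 1 ≤ x) :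
    1 - √((x - 1) / x) = (x * (1 + √((x - 1) / x)))⁻¹ := by
  have hx0 : 0 < x := by linarith
  have hsq : √((x - 1) / x) ^ 2 = (x - 1) / x := Real.sq_sqrt (div_nonneg (by linarith) hx0.le)
  have hpos : 0 < 1 + √((x - 1) / x) := by positivity
  have hmul : x * √((x - 1) / x) ^ 2 = x - 1 := by rw [hsq]; field_simp
  field_simp
  linear_combination -hmul

lemma tendsto_sqrt_sub_one_div_pow {k : ℕ} (hk : k ≠ 0) :
    Tendsto (fun r : ℝ => √((r ^ k - 1) / r ^ k)) atTop (𝓝 1) := by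
  have hinv : Tendsto (fun r : ℝ => 1 - (r ^ k)⁻¹) atTop (𝓝 1) := by
    simpa using (tendsto_const_nhds (x := (1 : ℝ))).sub
      (tendsto_pow_atTop (α := ℝ) hk).inv_tendsto_atTop
  have := (Real.continuous_sqrt.tendsto 1).comp hinv
  rw [Real.sqrt_one] at this
  refine this.congr' ?_
  filter_upwards [eventually_gt_atTop 0] with r hr
  simp [sub_div, div_self (pow_pos hr k).ne']

end SqrtFactor

lemma schR_le_four_div_three {n : ℕ} (hn : 3 ≤ n) : schR n ≤ 4 / 3 := by
  have hn' : (1 : ℝ) ≤ n - 2 := by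
    have : (3 : ℝ) ≤ n := by exact_mod_cast hn
    linarith
  simpa [schR] using Real.rpow_le_rpow_of_exponent_le (by norm_num : (1 : ℝ) ≤ 4 / 3)
    (inv_le_one_of_one_le₀ hn')

lemma schDelta_eq_of_four_div_three_le {n : ℕ} (hn : 3 ≤ n) {r : ℝ} (hr : 4 / 3 ≤ r) :
    schDelta n r = 2 * r / (1 + √((r ^ (n - 2) - 1) / r ^ (n - 2))) := by
  have hr1 : 1 ≤ r := by linarith
  have hpow : 1 ≤ r ^ (n - 2) := one_le_pow₀ hr1
  have hsucc : r ^ (n - 1) = r ^ (n - 2) * r := by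
    rw [← pow_succ]; congr 1; omega
  rw [schDelta, if_neg (by linarith [schR_le_four_div_three hn]),
    one_sub_sqrt_sub_one_div_self hpow, hsucc]
  have : 0 < 1 + √((r ^ (n - 2) - 1) / r ^ (n - 2)) := by positivity
  field_simp

noncomputable def hardyTest (α r : ℝ) : ℝ := (r - 1) * r ^ (-(α + 1))

section HardyTest

variable (α : ℝ) {r : ℝ}

lemma hasDerivAt_hardyTest (hr : 0 < r) :
    HasDerivAt (hardyTest α) ((1 - α * (r - 1)) * r ^ (-(α + 2))) r := by
  have h : HasDerivAt (hardyTest α)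
      (1 * r ^ (-(α + 1)) + (r - 1) * (-(α + 1) * r ^ (-(α + 1) - 1))) r :=
    ((hasDerivAt_id r).sub_const 1).mul (Real.hasDerivAt_rpow_const (Or.inl hr.ne'))
  refine h.congr_deriv ?_
  have hsplit : r ^ (-(α + 1)) = r ^ (-(α + 2)) * r := by
    rw [← Real.rpow_add_one hr.ne']; ring_nf
  rw [hsplit, show -(α + 1) - 1 = -(α + 2) by ring]
  ring

lemma continuousOn_deriv_hardyTest : ContinuousOn (deriv (hardyTest α)) (Ioi 0) := by
  have : ContinuousOn (fun r => (1 - α * (r - 1)) * r ^ (-(α + 2))) (Ioi 0) :=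
    (continuousOn_const.sub (continuousOn_const.mul (continuousOn_id.sub continuousOn_const))).mul
      (continuousOn_id.rpow_const fun r hr => Or.inl (ne_of_gt hr))
  exact this.congr fun r hr => (hasDerivAt_hardyTest α hr).deriv

lemma integrableOn_deriv_hardyTest {a b : ℝ} (ha : 0 < a) :
    IntegrableOn (deriv (hardyTest α)) (Icc a b) :=
  ((continuousOn_deriv_hardyTest α).mono fun _ ht => ha.trans_le ht.1).integrableOn_Icc

lemma hardyTest_eq_add_integral_deriv {a x : ℝ} (ha : 0 < a) (hx : a ≤ x) :
    hardyTest α x = hardyTest α a + ∫ t in a..x, deriv (hardyTest α) t := by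
  have hpos : uIcc a x ⊆ Ioi 0 := fun t ht => ha.trans_le (by rw [uIcc_of_le hx] at ht; exact ht.1)
  rw [intervalIntegral.integral_deriv_eq_sub' _ rfl
    (fun t ht => (hasDerivAt_hardyTest α (hpos ht)).differentiableAt)
    ((continuousOn_deriv_hardyTest α).mono hpos), add_sub_cancel]

lemma tendsto_hardyTest_mul_rpow_sub_one {γ : ℝ} (hγ : -1 < γ) :
    Tendsto (fun r => hardyTest α r * (r - 1) ^ γ) (𝓝[>] 1) (𝓝 0) := by
  have hsub : Tendsto (fun r : ℝ => r - 1) (𝓝[>] 1) (𝓝 0) := by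
    simpa using (continuous_sub_right (1 : ℝ)).tendsto 1 |>.mono_left nhdsWithin_le_nhds
  have hpow : Tendsto (fun r : ℝ => (r - 1) ^ (γ + 1)) (𝓝[>] 1) (𝓝 0) := by
    simpa [Function.comp_def, Real.zero_rpow (by linarith : γ + 1 ≠ 0)] using
      (Real.continuousAt_rpow_const 0 (γ + 1) (Or.inr (by linarith))).tendsto.comp hsub
  have hone : Tendsto (fun r : ℝ => r ^ (-(α + 1))) (𝓝[>] 1) (𝓝 1) := by
    simpa using (Real.continuousAt_rpow_const 1 (-(α + 1)) (Or.inl one_ne_zero)).tendsto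
      |>.mono_left nhdsWithin_le_nhds
  have hprod := hpow.mul hone
  rw [zero_mul] at hprod
  refine hprod.congr' ?_
  filter_upwards [self_mem_nhdsWithin] with r (hr : 1 < r)
  rw [hardyTest, Real.rpow_add (by linarith), Real.rpow_one]
  ring

lemma tendsto_hardyTest_mul_rpow_atTop {γ : ℝ} (hγ : γ < α) :
    Tendsto (fun r => hardyTest α r * r ^ γ) atTop (𝓝 0) := by
  refine squeeze_zero' ?_ ?_ (tendsto_rpow_neg_atTop (by linarith : 0 < α - γ))
  · filter_upwards [eventually_ge_atTop 1] with r hr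
    have : 0 ≤ r - 1 := by linarith
    unfold hardyTest; positivity
  · filter_upwards [eventually_ge_atTop 1] with r hr
    have hr0 : 0 < r := by linarith
    calc hardyTest α r * r ^ γ ≤ r * r ^ (-(α + 1)) * r ^ γ := by
          unfold hardyTest; gcongr; linarith
      _ = r ^ (-(α - γ)) := by
          rw [mul_assoc, ← Real.rpow_add hr0, ← Real.rpow_one_add' hr0.le (by linarith)]
          ring_nf

lemma one_sub_inv_mul_rpow_neg_le_hardyTest {r₀ : ℝ} (hr₀ : 0 < r₀) (hr : r₀ ≤ r) :
    (1 - r₀⁻¹) * r ^ (-α) ≤ hardyTest α r := by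
  have hr0 : 0 < r := hr₀.trans_le hr
  have hsplit : r ^ (-α) = r * r ^ (-(α + 1)) := by
    rw [mul_comm, ← Real.rpow_add_one hr0.ne']; ring_nf
  rw [hsplit, hardyTest, ← mul_assoc]
  gcongr
  rw [sub_mul, inv_mul_eq_div, one_mul]
  have : 1 ≤ r / r₀ := (one_le_div hr₀).mpr hr
  linarith

end HardyTest

noncomputable def hardyTailConst (n : ℕ) (r₀ : ℝ) : ℝ :=
  ((1 - r₀⁻¹) * (1 + √((r₀ ^ (n - 2) - 1) / r₀ ^ (n - 2))) / 2) ^ 2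

lemma tendsto_hardyTailConst {n : ℕ} (hn : 3 ≤ n) :
    Tendsto (hardyTailConst n) atTop (𝓝 1) := by
  have h := ((tendsto_const_nhds (x := (1 : ℝ))).sub tendsto_inv_atTop_zero).mul
    ((tendsto_const_nhds (x := (1 : ℝ))).add (tendsto_sqrt_sub_one_div_pow (k := n - 2)
      (by omega))) |>.div_const 2 |>.pow 2
  norm_num at h
  exact h

lemma deriv_hardyTest_sq_mul_le {n : ℕ} (hn : 1 ≤ n) {α ε : ℝ} (hα : 0 ≤ α)
    (hαε : 2 * α = n - 2 + ε) {r : ℝ} (hr : 1 ≤ r) :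
    deriv (hardyTest α) r ^ 2 * r ^ (n - 1) * √((r ^ (n - 2) - 1) / r ^ (n - 2))
      ≤ α ^ 2 * r ^ (-1 - ε) + r ^ (-3 - ε) := by
  have hr0 : 0 < r := by linarith
  have hexp : (r ^ (-(α + 2))) ^ 2 * r ^ (n - 1) = r ^ (-3 - ε) := by
    rw [← Real.rpow_natCast _ 2, ← Real.rpow_natCast r, ← Real.rpow_mul hr0.le,
      ← Real.rpow_add hr0]
    congr 1
    push_cast [Nat.cast_sub hn]
    linarith
  have hsq : r ^ 2 * r ^ (-3 - ε) = r ^ (-1 - ε) := by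
    rw [← Real.rpow_natCast, ← Real.rpow_add hr0]; norm_num; ring_nf
  rw [(hasDerivAt_hardyTest α hr0).deriv]
  calc ((1 - α * (r - 1)) * r ^ (-(α + 2))) ^ 2 * r ^ (n - 1)
        * √((r ^ (n - 2) - 1) / r ^ (n - 2))
      ≤ ((1 - α * (r - 1)) * r ^ (-(α + 2))) ^ 2 * r ^ (n - 1) :=
        mul_le_of_le_one_right (by positivity) (sqrt_sub_one_div_self_le_one (by positivity))
    _ = (1 - α * (r - 1)) ^ 2 * r ^ (-3 - ε) := by rw [mul_pow, mul_assoc, hexp]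
    _ ≤ (α ^ 2 * r ^ 2 + 1) * r ^ (-3 - ε) := by
        gcongr
        nlinarith [mul_nonneg hα (by linarith : 0 ≤ r - 1)]
    _ = α ^ 2 * r ^ (-1 - ε) + r ^ (-3 - ε) := by rw [← hsq]; ring

lemma hardyTailConst_mul_rpow_le {n : ℕ} (hn : 3 ≤ n) {α ε : ℝ} (hαε : 2 * α = n - 2 + ε)
    {r₀ r : ℝ} (hr₀ : 4 / 3 ≤ r₀) (hr : r₀ ≤ r) :
    hardyTailConst n r₀ * r ^ (-1 - ε)
      ≤ hardyTest α r ^ 2 / schDelta n r ^ 2 * r ^ (n - 1)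
        * √(r ^ (n - 2) / (r ^ (n - 2) - 1)) := by
  have hr₀1 : 1 < r₀ := by linarith
  have hr1 : 1 < r := hr₀1.trans_le hr
  have hr0 : 0 < r := by linarith
  have hpow : 1 < r ^ (n - 2) := one_lt_pow₀ hr1 (by omega)
  set s := √((r ^ (n - 2) - 1) / r ^ (n - 2))
  set s₀ := √((r₀ ^ (n - 2) - 1) / r₀ ^ (n - 2))
  have hs : s₀ ≤ s := sqrt_sub_one_div_self_mono (by positivity) (by gcongr)
  have hg : (1 - r₀⁻¹) * r ^ (-α) ≤ hardyTest α r :=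
    one_sub_inv_mul_rpow_neg_le_hardyTest α (by linarith) hr
  have hexp : (r ^ (-α)) ^ 2 * r ^ (n - 1) = r ^ (-1 - ε) * r ^ 2 := by
    rw [← Real.rpow_natCast _ 2, ← Real.rpow_natCast r, ← Real.rpow_natCast r 2,
      ← Real.rpow_mul hr0.le, ← Real.rpow_add hr0, ← Real.rpow_add hr0]
    congr 1
    push_cast [Nat.cast_sub (by omega : 1 ≤ n)]
    linarith
  have hr₀inv : 0 ≤ 1 - r₀⁻¹ := sub_nonneg.mpr (inv_le_one_of_one_le₀ hr₀1.le)
  rw [schDelta_eq_of_four_div_three_le hn (hr₀.trans hr)]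
  calc hardyTailConst n r₀ * r ^ (-1 - ε)
      = ((1 - r₀⁻¹) * (1 + s₀) / 2) ^ 2 * ((r ^ (-α)) ^ 2 * r ^ (n - 1)) / r ^ 2 := by
        rw [hexp, show hardyTailConst n r₀ = ((1 - r₀⁻¹) * (1 + s₀) / 2) ^ 2 from rfl]
        field_simp
    _ = ((1 - r₀⁻¹) * r ^ (-α)) ^ 2 * ((1 + s₀) / (2 * r)) ^ 2 * r ^ (n - 1) := by ring
    _ ≤ hardyTest α r ^ 2 * ((1 + s) / (2 * r)) ^ 2 * r ^ (n - 1) := by gcongr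
    _ = hardyTest α r ^ 2 / (2 * r / (1 + s)) ^ 2 * r ^ (n - 1) := by
        rw [div_eq_mul_inv _ ((2 * r / (1 + s)) ^ 2), ← inv_pow, inv_div]
    _ ≤ hardyTest α r ^ 2 / (2 * r / (1 + s)) ^ 2 * r ^ (n - 1)
          * √(r ^ (n - 2) / (r ^ (n - 2) - 1)) :=
        le_mul_of_one_le_right (by positivity) (one_le_sqrt_div_sub_one hpow)

lemma lintegral_Ioi_ofReal_mul_rpow {a p C : ℝ} (ha : 0 < a) (hp : p < -1) (hC : 0 ≤ C) :
    ∫⁻ r in Ioi a, ENNReal.ofReal (C * r ^ p) = ENNReal.ofReal (C * (-a ^ (p + 1) / (p + 1))) := by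
  rw [← ofReal_integral_eq_lintegral_ofReal ((integrableOn_Ioi_rpow_of_lt hp ha).const_mul C),
    integral_const_mul, integral_Ioi_rpow_of_lt hp ha]
  filter_upwards [ae_restrict_mem measurableSet_Ioi] with r (hr : a < r)
  exact mul_nonneg hC (Real.rpow_nonneg (ha.trans hr).le p)

lemma lintegral_deriv_hardyTest_le {n : ℕ} (hn : 1 ≤ n) {α ε : ℝ} (hα : 0 ≤ α) (hε : 0 < ε)
    (hαε : 2 * α = n - 2 + ε) :
    ∫⁻ r in Ioi (1 : ℝ), ENNReal.ofReal (deriv (hardyTest α) r ^ 2 * r ^ (n - 1)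
        * √((r ^ (n - 2) - 1) / r ^ (n - 2)))
      ≤ ENNReal.ofReal (α ^ 2 / ε + 1 / (2 + ε)) := by
  calc _ ≤ ∫⁻ r in Ioi (1 : ℝ),
          ENNReal.ofReal (α ^ 2 * r ^ (-1 - ε)) + ENNReal.ofReal (1 * r ^ (-3 - ε)) :=
        setLIntegral_mono' measurableSet_Ioi fun r (hr : 1 < r) =>
          (ENNReal.ofReal_le_ofReal (deriv_hardyTest_sq_mul_le hn hα hαε hr.le)).trans
            (by rw [one_mul]; exact ENNReal.ofReal_add_le)
    _ = ENNReal.ofReal (α ^ 2 / ε) + ENNReal.ofReal (1 / (2 + ε)) := by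
        rw [lintegral_add_left (by fun_prop), lintegral_Ioi_ofReal_mul_rpow one_pos (by linarith)
          (sq_nonneg α), lintegral_Ioi_ofReal_mul_rpow one_pos (by linarith) zero_le_one,
          Real.one_rpow, Real.one_rpow, show -1 - ε + 1 = -ε by ring,
          show -3 - ε + 1 = -(2 + ε) by ring, neg_div_neg_eq, neg_div_neg_eq, mul_one_div,
          one_mul]
    _ = ENNReal.ofReal (α ^ 2 / ε + 1 / (2 + ε)) :=
        (ENNReal.ofReal_add (by positivity) (by positivity)).symm

lemma ofReal_le_lintegral_hardyTest_sq_div_schDelta_sq {n : ℕ} (hn : 3 ≤ n) {α ε : ℝ}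
    (hε : 0 < ε) (hαε : 2 * α = n - 2 + ε) {r₀ : ℝ} (hr₀ : 4 / 3 ≤ r₀) :
    ENNReal.ofReal (hardyTailConst n r₀ * (r₀ ^ (-ε) / ε))
      ≤ ∫⁻ r in Ioi (1 : ℝ), ENNReal.ofReal (hardyTest α r ^ 2 / schDelta n r ^ 2
          * r ^ (n - 1) * √(r ^ (n - 2) / (r ^ (n - 2) - 1))) := by
  calc _ = ∫⁻ r in Ioi r₀, ENNReal.ofReal (hardyTailConst n r₀ * r ^ (-1 - ε)) := by
        rw [lintegral_Ioi_ofReal_mul_rpow (C := hardyTailConst n r₀) (by linarith) (by linarith)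
          (sq_nonneg _)]
        congr 2
        rw [show -1 - ε + 1 = -ε by ring]
        field_simp
    _ ≤ _ := setLIntegral_mono' measurableSet_Ioi fun r (hr : r₀ < r) =>
        ENNReal.ofReal_le_ofReal (hardyTailConst_mul_rpow_le hn hαε hr₀ hr.le)
    _ ≤ _ := lintegral_mono_set (Ioi_subset_Ioi (by linarith))

lemma le_sq_of_eventually_forall_pos {c β : ℝ} {K : ℝ → ℝ} (hK : Tendsto K atTop (𝓝 1))
    (h : ∀ᶠ r₀ in atTop, ∀ ε > 0, c * K r₀ * r₀ ^ (-ε) ≤ (β + ε / 2) ^ 2 + ε / (2 + ε)) :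
    c ≤ β ^ 2 := by
  have hlim : ∀ᶠ r₀ in atTop, c * K r₀ ≤ β ^ 2 := by
    filter_upwards [h, eventually_gt_atTop 0] with r₀ hr₀ hpos
    have hleft : ContinuousAt (fun ε : ℝ => c * K r₀ * r₀ ^ (-ε)) 0 :=
      continuousAt_const.mul ((Real.continuousAt_const_rpow hpos.ne').comp continuousAt_neg)
    have hright : ContinuousAt (fun ε : ℝ => (β + ε / 2) ^ 2 + ε / (2 + ε)) 0 := by
      fun_prop (disch := norm_num)
    refine le_of_tendsto_of_tendsto (b := 𝓝[>] 0) ?_ ?_ (eventually_nhdsWithin_of_forall hr₀)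
    · simpa using hleft.tendsto.mono_left nhdsWithin_le_nhds
    · simpa using hright.tendsto.mono_left nhdsWithin_le_nhds
  exact le_of_tendsto (by simpa using hK.const_mul c) hlim

theorem schwarzschild_hardy_sharp_general (n : ℕ) (hn : 3 ≤ n) (c : ℝ)
    (h : ∀ g : ℝ → ℝ,
      (∀ a b : ℝ, 1 < a → a ≤ b →
        MeasureTheory.IntegrableOn (deriv g) (Set.Icc a b) ∧
        ∀ x ∈ Set.Icc a b, g x = g a + ∫ t in a..x, deriv g t) →
      Filter.Tendsto (fun r : ℝ => g r * (r - 1) ^ (-(1 : ℝ) / 4))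
        (nhdsWithin 1 (Set.Ioi 1)) (nhds 0) →
      Filter.Tendsto (fun r : ℝ => g r * r ^ (-((n : ℝ) - 2) / 2))
        Filter.atTop (nhds 0) →
      ∫⁻ r in Set.Ioi (1 : ℝ),
          ENNReal.ofReal (deriv g r ^ 2 * r ^ (n - 1)
            * Real.sqrt ((r ^ (n - 2) - 1) / r ^ (n - 2)))
        ≥ ENNReal.ofReal c *
          ∫⁻ r in Set.Ioi (1 : ℝ),
            ENNReal.ofReal (g r ^ 2 / schDelta n r ^ 2 * r ^ (n - 1)
              * Real.sqrt (r ^ (n - 2) / (r ^ (n - 2) - 1)))) :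
    c ≤ (((n : ℝ) - 2) / 2) ^ 2 := by
  refine le_sq_of_eventually_forall_pos (tendsto_hardyTailConst hn) ?_
  filter_upwards [eventually_ge_atTop (4 / 3 : ℝ)] with r₀ hr₀ ε hε
  set α := ((n : ℝ) - 2) / 2 + ε / 2
  have hαε : 2 * α = n - 2 + ε := by ring
  have hn' : (3 : ℝ) ≤ n := by exact_mod_cast hn
  have hα : 0 ≤ α := by linarith
  have hhardy := h (hardyTest α)
    (fun a b ha _ => ⟨integrableOn_deriv_hardyTest α (by linarith),
      fun x hx => hardyTest_eq_add_integral_deriv α (by linarith) hx.1⟩)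
    (tendsto_hardyTest_mul_rpow_sub_one α (by norm_num))
    (tendsto_hardyTest_mul_rpow_atTop α (by linarith))
  have hK : 0 ≤ hardyTailConst n r₀ * (r₀ ^ (-ε) / ε) := by unfold hardyTailConst; positivity
  have hratio : c * (hardyTailConst n r₀ * (r₀ ^ (-ε) / ε)) ≤ α ^ 2 / ε + 1 / (2 + ε) := by
    rw [← ENNReal.ofReal_le_ofReal_iff (by positivity), ENNReal.ofReal_mul' hK]
    exact (mul_le_mul_right
      (ofReal_le_lintegral_hardyTest_sq_div_schDelta_sq hn hε hαε hr₀) _).trans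
        (hhardy.trans (lintegral_deriv_hardyTest_le (by omega) hα hε hαε))
  calc c * hardyTailConst n r₀ * r₀ ^ (-ε)
      = ε * (c * (hardyTailConst n r₀ * (r₀ ^ (-ε) / ε))) := by field_simp
    _ ≤ ε * (α ^ 2 / ε + 1 / (2 + ε)) := by gcongr
    _ = α ^ 2 + ε / (2 + ε) := by field_simp

/-- sharpness of the constant `((n−2)/2)²` in the radial Schwarzschild Hardy
inequality: any constant `c > 0` for which the Hardy inequality holds for all admissible
functions (locally absolutely continuous on `(1,∞)`, encoded via the fundamental theorem of
calculus characterization, with `g(r)(r−1)^(−1/4) → 0` as `r → 1⁺` and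
`g(r) r^(−(n−2)/2) → 0` as `r → ∞`) satisfies `c ≤ ((n−2)/2)²`. -/
theorem schwarzschild_hardy_sharp (n : ℕ) (hn : 3 ≤ n) (c : ℝ) (hc : 0 < c)
    (h : ∀ g : ℝ → ℝ,
      (∀ a b : ℝ, 1 < a → a ≤ b →
        MeasureTheory.IntegrableOn (deriv g) (Set.Icc a b) ∧
        ∀ x ∈ Set.Icc a b, g x = g a + ∫ t in a..x, deriv g t) →
      Filter.Tendsto (fun r : ℝ => g r * (r - 1) ^ (-(1 : ℝ) / 4))
        (nhdsWithin 1 (Set.Ioi 1)) (nhds 0) →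
      Filter.Tendsto (fun r : ℝ => g r * r ^ (-((n : ℝ) - 2) / 2))
        Filter.atTop (nhds 0) →
      ∫⁻ r in Set.Ioi (1 : ℝ),
          ENNReal.ofReal (deriv g r ^ 2 * r ^ (n - 1)
            * Real.sqrt ((r ^ (n - 2) - 1) / r ^ (n - 2)))
        ≥ ENNReal.ofReal c *
          ∫⁻ r in Set.Ioi (1 : ℝ),
            ENNReal.ofReal (g r ^ 2 / schDelta n r ^ 2 * r ^ (n - 1)
              * Real.sqrt (r ^ (n - 2) / (r ^ (n - 2) - 1)))) :
    c ≤ (((n : ℝ) - 2) / 2) ^ 2 :=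
  schwarzschild_hardy_sharp_general n hn c h
end

section
/- Let n ≥ 3 be an integer, f(r) = δ(r)/(n−2), R = (4/3)^{1/(n−2)}, and for ε > 0 define ψ_ε : (1,∞) → ℝ by ψ_ε(r) = exp(−ε ∫_r^R (1/f(ξ)) √(ξ^{n−2}/(ξ^{n−2}−1)) dξ) for 1 < r ≤ R and ψ_ε(r) = exp(−ε ∫_R^r (1/f(ξ)) √(ξ^{n−2}/(ξ^{n−2}−1)) dξ) for r ≥ R. Then ∫₁^∞ (ψ_ε(r)²/δ(r)²) r^{n−1} √(r^{n−2}/(r^{n−2}−1)) dr → ∞ as ε → 0⁺. -/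
open MeasureTheory Filter

/-- `f(r) = δ(r)/(n−2)`. -/
noncomputable def schF (n : ℕ) (r : ℝ) : ℝ := schDelta n r / ((n : ℝ) - 2)

/-- The minimising family `ψ_ε` for the Schwarzschild Hardy inequality. -/
noncomputable def schPsi (n : ℕ) (ε : ℝ) (r : ℝ) : ℝ :=
  if r ≤ schR n then
    Real.exp (-ε * ∫ ξ in r..(schR n), (1 / schF n ξ) * Real.sqrt (ξ ^ (n - 2) / (ξ ^ (n - 2) - 1)))
  else
    Real.exp (-ε * ∫ ξ in (schR n)..r, (1 / schF n ξ) * Real.sqrt (ξ ^ (n - 2) / (ξ ^ (n - 2) - 1)))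

lemma schR_one_lt {n : ℕ} (hn : 3 ≤ n) : 1 < schR n := by
  have h3 : (3:ℝ) ≤ (n:ℝ) := by exact_mod_cast hn
  apply Real.one_lt_rpow_iff_of_pos (by norm_num) |>.mpr
  left
  constructor
  · norm_num
  · rw [inv_pos]; linarith

lemma schR_pow {n : ℕ} (hn : 3 ≤ n) : (schR n) ^ (n - 2) = 4 / 3 := by
  have h3 : (3:ℝ) ≤ (n:ℝ) := by exact_mod_cast hn
  have hcast : ((n - 2 : ℕ) : ℝ) = (n:ℝ) - 2 := by
    push_cast [Nat.cast_sub (by omega : 2 ≤ n)]; ring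
  rw [schR, ← Real.rpow_natCast (((4:ℝ)/3) ^ (((n:ℝ)-2)⁻¹)) (n-2),
    ← Real.rpow_mul (by norm_num), hcast, inv_mul_cancel₀ (by linarith), Real.rpow_one]

lemma sch_t_ge {n : ℕ} (hn : 3 ≤ n) {r : ℝ} (hr : schR n ≤ r) : 4/3 ≤ r ^ (n - 2) := by
  rw [← schR_pow hn]
  exact pow_le_pow_left₀ (le_of_lt (lt_trans one_pos (schR_one_lt hn))) hr _

lemma schDelta_bounds {n : ℕ} (hn : 3 ≤ n) {r : ℝ} (hr : schR n ≤ r) :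
    r ≤ schDelta n r ∧ schDelta n r ≤ 2 * r := by
  have hr1 : 1 < r := lt_of_lt_of_le (schR_one_lt hn) hr
  have hr0 : 0 < r := lt_trans one_pos hr1
  have ht43 : 4/3 ≤ r ^ (n-2) := sch_t_ge hn hr
  set t := r ^ (n-2) with htdef
  have ht0 : 0 < t := by linarith
  set u := t⁻¹ with hudef
  have hu0 : 0 < u := inv_pos.mpr ht0
  have htu : t * u = 1 := mul_inv_cancel₀ ht0.ne'
  have hu34 : u ≤ 3/4 := by
    rw [hudef]
    rw [inv_le_comm₀ (by linarith) (by norm_num)]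
    linarith
  have hy : (t - 1) / t = 1 - u := by
    rw [hudef]; field_simp
  set s := Real.sqrt ((t - 1) / t) with hsdef
  have hs0 : 0 ≤ s := Real.sqrt_nonneg _
  have hs_up : s ≤ 1 - u/2 := by
    rw [hsdef, hy]
    calc Real.sqrt (1 - u) ≤ Real.sqrt ((1 - u/2)^2) :=
          Real.sqrt_le_sqrt (by nlinarith [sq_nonneg u])
      _ = 1 - u/2 := Real.sqrt_sq (by linarith)
  have hs_lo : 1 - u ≤ s := by
    rw [hsdef, hy]
    calc 1 - u = Real.sqrt ((1-u)^2) := (Real.sqrt_sq (by linarith)).symm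
      _ ≤ Real.sqrt (1 - u) := Real.sqrt_le_sqrt (by nlinarith)
  have hpow : r ^ (n-1) = t * r := by
    rw [htdef, ← pow_succ]
    congr 1
    omega
  have hδ : schDelta n r = 2 * r ^ (n-1) * (1 - s) := by
    rw [schDelta, if_neg (not_lt.mpr hr)]
  constructor
  · rw [hδ, hpow]
    have h1 : u/2 ≤ 1 - s := by linarith
    calc r = 2 * (t * r) * (u/2) := by
          have : 2 * (t * r) * (u/2) = (t * u) * r := by ring
          rw [this, htu, one_mul]
      _ ≤ 2 * (t * r) * (1 - s) := by
          apply mul_le_mul_of_nonneg_left h1 (by positivity)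
  · rw [hδ, hpow]
    have h1 : 1 - s ≤ u := by linarith
    calc 2 * (t * r) * (1 - s) ≤ 2 * (t * r) * u := by
          apply mul_le_mul_of_nonneg_left h1 (by positivity)
      _ = 2 * r := by
          have : 2 * (t * r) * u = 2 * ((t * u) * r) := by ring
          rw [this, htu, one_mul]

lemma sqrt_ratio_bounds {t : ℝ} (ht : 4/3 ≤ t) :
    1 ≤ Real.sqrt (t / (t - 1)) ∧ Real.sqrt (t / (t - 1)) ≤ 2 := by
  have ht1 : 0 < t - 1 := by linarith
  constructor
  · calc (1:ℝ) = Real.sqrt 1 := Real.sqrt_one.symm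
      _ ≤ _ := Real.sqrt_le_sqrt (by rw [le_div_iff₀ ht1]; linarith)
  · rw [show (2:ℝ) = Real.sqrt (2^2) from (Real.sqrt_sq (by norm_num)).symm]
    apply Real.sqrt_le_sqrt
    rw [div_le_iff₀ ht1]
    nlinarith

lemma schJ_le {n : ℕ} (hn : 3 ≤ n) {r : ℝ} (hr : schR n ≤ r) :
    (∫ ξ in (schR n)..r, (1 / schF n ξ) * Real.sqrt (ξ ^ (n - 2) / (ξ ^ (n - 2) - 1)))
      ≤ 2 * ((n:ℝ) - 2) * Real.log r := by
  have hR1 : 1 < schR n := schR_one_lt hn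
  have hR0 : 0 < schR n := lt_trans one_pos hR1
  have hn2 : (0:ℝ) < (n:ℝ) - 2 := by
    have : (3:ℝ) ≤ (n:ℝ) := by exact_mod_cast hn
    linarith
  set S := Set.Icc (schR n) r with hS
  -- basic facts on S
  have hmem : ∀ ξ ∈ S, schR n ≤ ξ ∧ 0 < ξ ∧ 4/3 ≤ ξ ^ (n-2) := by
    intro ξ hξ
    have h1 : schR n ≤ ξ := hξ.1
    exact ⟨h1, lt_trans one_pos (lt_of_lt_of_le hR1 h1), sch_t_ge hn h1⟩
  -- continuity of the integrand on S
  have c1 : ContinuousOn (fun ξ : ℝ => ξ ^ (n-2)) S := (continuous_pow _).continuousOn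
  have c2 : ContinuousOn (fun ξ : ℝ => Real.sqrt ((ξ ^ (n-2) - 1) / ξ ^ (n-2))) S :=
    Real.continuous_sqrt.comp_continuousOn
      ((c1.sub continuousOn_const).div c1 (fun ξ hξ => by
        have := (hmem ξ hξ).2.2; positivity))
  have c3 : ContinuousOn (fun ξ : ℝ => schDelta n ξ) S := by
    apply ContinuousOn.congr
      (f := fun ξ : ℝ => 2 * ξ ^ (n-1) * (1 - Real.sqrt ((ξ ^ (n-2) - 1) / ξ ^ (n-2))))
    · exact ((continuousOn_const.mul (continuous_pow _).continuousOn).mul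
        (continuousOn_const.sub c2))
    · intro ξ hξ
      simp only [schDelta, if_neg (not_lt.mpr (hmem ξ hξ).1)]
  have hδpos : ∀ ξ ∈ S, 0 < schDelta n ξ := fun ξ hξ =>
    lt_of_lt_of_le (hmem ξ hξ).2.1 (schDelta_bounds hn (hmem ξ hξ).1).1
  have c4 : ContinuousOn (fun ξ : ℝ => 1 / schF n ξ) S := by
    simp only [schF, one_div_div]
    exact continuousOn_const.div c3 (fun ξ hξ => (hδpos ξ hξ).ne')
  have c5 : ContinuousOn (fun ξ : ℝ => Real.sqrt (ξ ^ (n-2) / (ξ ^ (n-2) - 1))) S :=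
    Real.continuous_sqrt.comp_continuousOn
      (c1.div (c1.sub continuousOn_const) (fun ξ hξ => by
        have := (hmem ξ hξ).2.2; intro h; rw [sub_eq_zero] at h; linarith))
  have cg : ContinuousOn
      (fun ξ : ℝ => (1 / schF n ξ) * Real.sqrt (ξ ^ (n-2) / (ξ ^ (n-2) - 1))) S := c4.mul c5
  have hIg : IntervalIntegrable
      (fun ξ : ℝ => (1 / schF n ξ) * Real.sqrt (ξ ^ (n-2) / (ξ ^ (n-2) - 1)))
      volume (schR n) r := by
    apply ContinuousOn.intervalIntegrable
    rwa [Set.uIcc_of_le hr]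
  have hIh : IntervalIntegrable (fun ξ : ℝ => 2 * ((n:ℝ) - 2) * ξ⁻¹) volume (schR n) r := by
    apply ContinuousOn.intervalIntegrable
    apply continuousOn_const.mul
    apply continuousOn_inv₀.mono
    intro ξ hξ
    rw [Set.uIcc_of_le hr] at hξ
    exact (hmem ξ hξ).2.1.ne'
  have hptle : ∀ ξ ∈ S,
      (1 / schF n ξ) * Real.sqrt (ξ ^ (n-2) / (ξ ^ (n-2) - 1)) ≤ 2 * ((n:ℝ) - 2) * ξ⁻¹ := by
    intro ξ hξ
    obtain ⟨h1, h2, h3⟩ := hmem ξ hξ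
    have hδ := schDelta_bounds hn h1
    have hf : 1 / schF n ξ = ((n:ℝ) - 2) / schDelta n ξ := by rw [schF, one_div_div]
    rw [hf]
    have hb1 : ((n:ℝ) - 2) / schDelta n ξ ≤ ((n:ℝ) - 2) / ξ :=
      div_le_div_of_nonneg_left hn2.le h2 hδ.1
    have hb2 := (sqrt_ratio_bounds h3).2
    calc ((n:ℝ) - 2) / schDelta n ξ * Real.sqrt (ξ ^ (n-2) / (ξ ^ (n-2) - 1))
        ≤ (((n:ℝ) - 2) / ξ) * 2 := by
          apply mul_le_mul hb1 hb2 (Real.sqrt_nonneg _)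
          positivity
      _ = 2 * ((n:ℝ) - 2) * ξ⁻¹ := by field_simp
  have hmono := intervalIntegral.integral_mono_on hr hIg hIh (fun ξ hξ => hptle ξ hξ)
  have hcomp : (∫ ξ in (schR n)..r, 2 * ((n:ℝ) - 2) * ξ⁻¹)
      = 2 * ((n:ℝ) - 2) * Real.log (r / schR n) := by
    rw [intervalIntegral.integral_const_mul, integral_inv]
    rw [Set.uIcc_of_le hr]
    intro h
    exact absurd h.1 (by linarith)
  rw [hcomp] at hmono
  refine hmono.trans ?_
  have hlogR : 0 ≤ Real.log (schR n) := Real.log_nonneg hR1.le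
  rw [Real.log_div (by linarith : r ≠ 0) hR0.ne']
  nlinarith [Real.log_nonneg (le_trans hR1.le hr)]

lemma sch_base_top {n : ℕ} (hn : 3 ≤ n) :
    ∫⁻ r in Set.Ioi (schR n), ENNReal.ofReal (r ^ (-(1:ℝ)/2) / 4) = ⊤ := by
  have hR0 : 0 < schR n := lt_trans one_pos (schR_one_lt hn)
  by_contra h
  have hmeas : AEStronglyMeasurable (fun r : ℝ => r ^ (-(1:ℝ)/2) / 4)
      (volume.restrict (Set.Ioi (schR n))) :=
    ((measurable_id.pow_const _).div_const 4).aestronglyMeasurable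
  have hnn : 0 ≤ᵐ[volume.restrict (Set.Ioi (schR n))] fun r : ℝ => r ^ (-(1:ℝ)/2) / 4 := by
    filter_upwards [ae_restrict_mem measurableSet_Ioi] with r hr
    have : 0 < r := lt_trans hR0 hr
    positivity
  have hint : IntegrableOn (fun r : ℝ => r ^ (-(1:ℝ)/2) / 4) (Set.Ioi (schR n)) :=
    (lintegral_ofReal_ne_top_iff_integrable hmeas hnn).mp h
  have hint2 : IntegrableOn (fun r : ℝ => r ^ (-(1:ℝ)/2)) (Set.Ioi (schR n)) := by
    have h4 := hint.const_mul 4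
    have : (fun x : ℝ => 4 * (x ^ (-(1:ℝ)/2) / 4)) = fun x : ℝ => x ^ (-(1:ℝ)/2) := by
      funext x; field_simp
    rwa [this] at h4
  rw [show (-(1:ℝ)/2) = (-1/2 : ℝ) by norm_num] at hint2
  have := (integrableOn_Ioi_rpow_iff hR0).mp hint2
  norm_num at this

lemma sch_pointwise {n : ℕ} (hn : 3 ≤ n) {ε : ℝ} (hε0 : 0 < ε)
    (hε : ε ≤ 1 / (8 * ((n:ℝ) - 2))) {r : ℝ} (hr : schR n < r) :
    r ^ (-(1:ℝ)/2) / 4 ≤ schPsi n ε r ^ 2 / schDelta n r ^ 2 * r ^ (n - 1)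
      * Real.sqrt (r ^ (n - 2) / (r ^ (n - 2) - 1)) := by
  have hn2 : (0:ℝ) < (n:ℝ) - 2 := by
    have : (3:ℝ) ≤ (n:ℝ) := by exact_mod_cast hn
    linarith
  have hr1 : 1 < r := lt_trans (schR_one_lt hn) hr
  have hr0 : 0 < r := lt_trans one_pos hr1
  have hlog : 0 ≤ Real.log r := Real.log_nonneg hr1.le
  have hδ := schDelta_bounds hn hr.le
  have hδ0 : 0 < schDelta n r := lt_of_lt_of_le hr0 hδ.1
  have ht43 : 4/3 ≤ r ^ (n - 2) := sch_t_ge hn hr.le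
  have hs1 : 1 ≤ Real.sqrt (r ^ (n - 2) / (r ^ (n - 2) - 1)) := (sqrt_ratio_bounds ht43).1
  -- lower bound on ψ²
  set J := ∫ ξ in (schR n)..r, (1 / schF n ξ) * Real.sqrt (ξ ^ (n - 2) / (ξ ^ (n - 2) - 1))
    with hJdef
  have hψ : schPsi n ε r = Real.exp (-ε * J) := by
    rw [schPsi, if_neg (not_le.mpr hr)]
  have hJ : J ≤ 2 * ((n:ℝ) - 2) * Real.log r := schJ_le hn hr.le
  have hεb : 8 * ((n:ℝ) - 2) * ε ≤ 1 := by
    rw [le_div_iff₀ (by positivity)] at hε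
    linarith
  have hψ2 : r ^ (-(1:ℝ)/2) ≤ schPsi n ε r ^ 2 := by
    rw [hψ, sq, ← Real.exp_add, Real.rpow_def_of_pos hr0]
    apply Real.exp_le_exp.mpr
    have h1 : ε * J ≤ ε * (2 * ((n:ℝ) - 2) * Real.log r) :=
      mul_le_mul_of_nonneg_left hJ hε0.le
    have h2 : ε * (2 * ((n:ℝ) - 2) * Real.log r) ≤ (1/4) * Real.log r := by
      nlinarith
    nlinarith
  have hψ0 : 0 ≤ schPsi n ε r ^ 2 := sq_nonneg _
  have hrp : r ^ 2 ≤ r ^ (n - 1) := pow_le_pow_right₀ hr1.le (by omega)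
  have hdiv : r ^ (-(1:ℝ)/2) / (4 * r ^ 2) ≤ schPsi n ε r ^ 2 / schDelta n r ^ 2 := by
    apply div_le_div₀ hψ0 hψ2 (by positivity)
    nlinarith [hδ.2, hδ0]
  calc r ^ (-(1:ℝ)/2) / 4
      = r ^ (-(1:ℝ)/2) / (4 * r ^ 2) * r ^ 2 * 1 := by
        field_simp
    _ ≤ schPsi n ε r ^ 2 / schDelta n r ^ 2 * r ^ (n - 1)
        * Real.sqrt (r ^ (n - 2) / (r ^ (n - 2) - 1)) := by
        apply mul_le_mul _ hs1 zero_le_one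
        · apply mul_nonneg (div_nonneg hψ0 (sq_nonneg _)) (by positivity)
        · apply mul_le_mul hdiv hrp (by positivity)
          exact div_nonneg hψ0 (sq_nonneg _)

lemma sch_lintegral_top {n : ℕ} (hn : 3 ≤ n) {ε : ℝ} (hε0 : 0 < ε)
    (hε : ε ≤ 1 / (8 * ((n:ℝ) - 2))) :
    (∫⁻ r in Set.Ioi (1 : ℝ),
        ENNReal.ofReal (schPsi n ε r ^ 2 / schDelta n r ^ 2 * r ^ (n - 1)
          * Real.sqrt (r ^ (n - 2) / (r ^ (n - 2) - 1)))) = ⊤ := by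
  refine top_le_iff.mp ?_
  calc (⊤ : ENNReal) = ∫⁻ r in Set.Ioi (schR n), ENNReal.ofReal (r ^ (-(1:ℝ)/2) / 4) :=
        (sch_base_top hn).symm
    _ ≤ ∫⁻ r in Set.Ioi (schR n),
          ENNReal.ofReal (schPsi n ε r ^ 2 / schDelta n r ^ 2 * r ^ (n - 1)
            * Real.sqrt (r ^ (n - 2) / (r ^ (n - 2) - 1))) := by
        apply lintegral_mono_ae
        filter_upwards [ae_restrict_mem measurableSet_Ioi] with r hr
        exact ENNReal.ofReal_le_ofReal (sch_pointwise hn hε0 hε hr)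
    _ ≤ _ := lintegral_mono_set (Set.Ioi_subset_Ioi (schR_one_lt hn).le)

/-- `∫₁^∞ (ψ_ε(r)²/δ(r)²) r^(n−1) √(r^(n−2)/(r^(n−2)−1)) dr → ∞` as `ε → 0⁺`. -/
theorem schwarzschild_hardy_minimising_denominator_diverges (n : ℕ) (hn : 3 ≤ n) :
    Filter.Tendsto
      (fun ε : ℝ => ∫⁻ r in Set.Ioi (1 : ℝ),
        ENNReal.ofReal (schPsi n ε r ^ 2 / schDelta n r ^ 2 * r ^ (n - 1)
          * Real.sqrt (r ^ (n - 2) / (r ^ (n - 2) - 1))))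
      (nhdsWithin 0 (Set.Ioi 0)) (nhds ⊤) := by
  have hn2 : (0:ℝ) < (n:ℝ) - 2 := by
    have : (3:ℝ) ≤ (n:ℝ) := by exact_mod_cast hn
    linarith
  have hc : (0:ℝ) < 1 / (8 * ((n:ℝ) - 2)) := by positivity
  have h1 : ∀ᶠ ε in nhdsWithin (0:ℝ) (Set.Ioi 0), ε < 1 / (8 * ((n:ℝ) - 2)) :=
    eventually_nhdsWithin_of_eventually_nhds (eventually_lt_nhds hc)
  have h2 : ∀ᶠ ε in nhdsWithin (0:ℝ) (Set.Ioi 0), ε ∈ Set.Ioi (0:ℝ) :=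
    eventually_mem_nhdsWithin
  have hev : ∀ᶠ ε in nhdsWithin (0:ℝ) (Set.Ioi 0),
      (⊤ : ENNReal) = ∫⁻ r in Set.Ioi (1 : ℝ),
        ENNReal.ofReal (schPsi n ε r ^ 2 / schDelta n r ^ 2 * r ^ (n - 1)
          * Real.sqrt (r ^ (n - 2) / (r ^ (n - 2) - 1))) := by
    filter_upwards [h1, h2] with ε hlt hpos
    exact (sch_lintegral_top hn hpos hlt.le).symm
  exact Tendsto.congr' hev tendsto_const_nhds
end

section
/- Let n ≥ 3 be an integer. Then d(r)/δ(r) → 1/(n−2) as r → 1⁺. -/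
open Filter

/-- The Riemannian distance from the event horizon:
`d(r) = ∫₁^r √(ξ^(n−2)/(ξ^(n−2)−1)) dξ`. -/
noncomputable def schDist (n : ℕ) (r : ℝ) : ℝ :=
  ∫ ξ in (1 : ℝ)..r, Real.sqrt (ξ ^ (n - 2) / (ξ ^ (n - 2) - 1))

private lemma aux_integrable {r C : ℝ} (hr : 1 ≤ r) {f : ℝ → ℝ} (hf : Measurable f)
    (hb : ∀ ξ ∈ Set.Ioc (1:ℝ) r, |f ξ| ≤ C * (ξ - 1) ^ (-(1/2) : ℝ)) :
    IntervalIntegrable f MeasureTheory.volume 1 r := by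
  have hg : IntervalIntegrable (fun ξ : ℝ => C * (ξ - 1) ^ (-(1/2):ℝ))
      MeasureTheory.volume 1 r := by
    have h0 := (intervalIntegral.intervalIntegrable_rpow' (a := 0) (b := r - 1)
      (r := -(1/2)) (by norm_num)).comp_sub_right 1
    simpa using h0.const_mul C
  apply hg.mono_fun' hf.aestronglyMeasurable.restrict
  rw [Filter.EventuallyLE, MeasureTheory.ae_restrict_iff' measurableSet_uIoc]
  refine Filter.Eventually.of_forall fun ξ hξ => ?_
  rw [Set.uIoc_of_le hr] at hξ
  simpa [Real.norm_eq_abs] using hb ξ hξ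

private lemma aux_rpow_half {C ξ : ℝ} (hC : 0 ≤ C) (hξ : 1 < ξ) :
    C / Real.sqrt (ξ - 1) = C * (ξ - 1) ^ (-(1/2) : ℝ) := by
  rw [div_eq_mul_inv, Real.sqrt_eq_rpow, ← Real.rpow_neg (by linarith)]

/-- `d(r)/δ(r) → 1/(n−2)` as `r → 1⁺`. -/
theorem schDist_div_schDelta_tendsto_one (n : ℕ) (hn : 3 ≤ n) :
    Filter.Tendsto (fun r : ℝ => schDist n r / schDelta n r)
      (nhdsWithin 1 (Set.Ioi 1)) (nhds (1 / ((n : ℝ) - 2))) := by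
  set m : ℕ := n - 2 with hmdef
  have hm1 : 1 ≤ m := by omega
  have hmne : m ≠ 0 := by omega
  have hcast : (n : ℝ) - 2 = (m : ℝ) := by
    rw [hmdef]; push_cast [Nat.cast_sub (by omega : 2 ≤ n)]; ring
  have hmR : (1:ℝ) ≤ (m:ℝ) := by exact_mod_cast hm1
  have hmRne : (m:ℝ) ≠ 0 := by positivity
  -- R > 1
  have hR : 1 < schR n := by
    rw [schR, Real.one_lt_rpow_iff_of_pos (by norm_num)]
    left
    constructor
    · norm_num
    · rw [hcast]; positivity
  -- the bounding functions
  set lo : ℝ → ℝ := fun r => (r ^ (m-1))⁻¹ * (Real.sqrt (r ^ m) / ((m:ℝ) * r ^ (n-1)))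
    with hlodef
  set hi : ℝ → ℝ := fun r => Real.sqrt (r ^ m) * (Real.sqrt (r ^ m) / ((m:ℝ) * r ^ (n-1)))
    with hhidef
  have hlo : Filter.Tendsto lo (nhdsWithin 1 (Set.Ioi 1)) (nhds (1 / ((n : ℝ) - 2))) := by
    have hc : ContinuousAt lo 1 := by
      apply ContinuousAt.mul
      · exact ContinuousAt.inv₀ (by fun_prop) (by norm_num)
      · exact ContinuousAt.div (by fun_prop) (by fun_prop) (by simp [hmRne])
    have := hc.tendsto.mono_left (nhdsWithin_le_nhds (s := Set.Ioi 1))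
    have hval : lo 1 = 1 / ((n:ℝ) - 2) := by
      simp [hlodef, hcast]
    rwa [hval] at this
  have hhi : Filter.Tendsto hi (nhdsWithin 1 (Set.Ioi 1)) (nhds (1 / ((n : ℝ) - 2))) := by
    have hc : ContinuousAt hi 1 := by
      apply ContinuousAt.mul (by fun_prop)
      exact ContinuousAt.div (by fun_prop) (by fun_prop) (by simp [hmRne])
    have := hc.tendsto.mono_left (nhdsWithin_le_nhds (s := Set.Ioi 1))
    have hval : hi 1 = 1 / ((n:ℝ) - 2) := by
      simp [hhidef, hcast]
    rwa [hval] at this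
  have hb1 : (1:ℝ) < min (schR n) 2 := by
    simp [hR]
  have hmem : Set.Ioo (1:ℝ) (min (schR n) 2) ∈ nhdsWithin (1:ℝ) (Set.Ioi 1) :=
    Ioo_mem_nhdsGT hb1
  -- main estimates for r in the interval
  have key : ∀ r ∈ Set.Ioo (1:ℝ) (min (schR n) 2),
      lo r ≤ schDist n r / schDelta n r ∧ schDist n r / schDelta n r ≤ hi r := by
    rintro r ⟨h1r, hr2'⟩
    have hrR : r < schR n := lt_of_lt_of_le hr2' (min_le_left _ _)
    have hr2 : r < 2 := lt_of_lt_of_le hr2' (min_le_right _ _)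
    have hr0 : (0:ℝ) < r := by linarith
    have hrm1 : 1 < r ^ m := one_lt_pow₀ h1r hmne
    set Q : ℝ := Real.sqrt (r ^ m - 1) with hQdef
    set S : ℝ := Real.sqrt (r ^ m) with hSdef
    have hQ : 0 < Q := Real.sqrt_pos.mpr (by linarith)
    have hS1 : 1 ≤ S := by
      rw [hSdef, show (1:ℝ) = Real.sqrt 1 by simp]
      exact Real.sqrt_le_sqrt (by linarith)
    have hS : 0 < S := by linarith
    have hrn1 : (0:ℝ) < r ^ (n-1) := by positivity
    have hrm1' : (0:ℝ) < r ^ (m-1) := by positivity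
    -- delta formula and positivity
    have hδeq : schDelta n r = 2 * r ^ (n-1) * (Q / S) := by
      rw [schDelta, if_pos hrR, ← hmdef, Real.sqrt_div (by linarith) _]
    have hδpos : 0 < schDelta n r := by rw [hδeq]; positivity
    -- point facts for ξ in Ioc 1 r
    have hfact : ∀ ξ ∈ Set.Ioc (1:ℝ) r, 1 < ξ ∧ ξ ≤ r ∧ 0 < ξ ^ m - 1 ∧
        ξ - 1 ≤ ξ ^ m - 1 := by
      rintro ξ ⟨hξ1, hξr⟩
      have h1 : ξ ≤ ξ ^ m := le_self_pow₀ (by linarith) hmne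
      have h2 : 1 < ξ ^ m := one_lt_pow₀ hξ1 hmne
      exact ⟨hξ1, hξr, by linarith, by linarith⟩
    -- integrability of f
    have hfint : IntervalIntegrable (fun ξ : ℝ => Real.sqrt (ξ ^ m / (ξ ^ m - 1)))
        MeasureTheory.volume 1 r := by
      apply aux_integrable (C := Real.sqrt (2 ^ m)) (le_of_lt h1r)
      · fun_prop
      · intro ξ hξ
        obtain ⟨hξ1, hξr, hp, hq⟩ := hfact ξ hξ
        rw [abs_of_nonneg (Real.sqrt_nonneg _), ← aux_rpow_half (Real.sqrt_nonneg _) hξ1,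
          ← Real.sqrt_div (by positivity)]
        apply Real.sqrt_le_sqrt
        exact div_le_div₀ (by positivity)
          (pow_le_pow_left₀ (by linarith) (by linarith) m) (by linarith) hq
    -- integrability of g₀
    have hgint : IntervalIntegrable (fun ξ : ℝ => ξ ^ (m-1) / Real.sqrt (ξ ^ m - 1))
        MeasureTheory.volume 1 r := by
      apply aux_integrable (C := (2:ℝ) ^ m) (le_of_lt h1r)
      · fun_prop
      · intro ξ hξ
        obtain ⟨hξ1, hξr, hp, hq⟩ := hfact ξ hξ
        have hQξ : 0 < Real.sqrt (ξ ^ m - 1) := Real.sqrt_pos.mpr hp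
        rw [abs_of_nonneg (by positivity), ← aux_rpow_half (by positivity) hξ1]
        have h1 : Real.sqrt (ξ - 1) ≤ Real.sqrt (ξ ^ m - 1) := Real.sqrt_le_sqrt hq
        have h2 : ξ ^ (m-1) ≤ 2 ^ m := by
          calc ξ ^ (m-1) ≤ 2 ^ (m-1) := pow_le_pow_left₀ (by linarith) (by linarith) _
          _ ≤ 2 ^ m := pow_le_pow_right₀ (by norm_num) (by omega)
        have h3 : 0 < Real.sqrt (ξ - 1) := Real.sqrt_pos.mpr (by linarith)
        exact div_le_div₀ (by positivity) h2 h3 h1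
    -- FTC
    have hFTC : (∫ ξ in (1:ℝ)..r, ξ ^ (m-1) / Real.sqrt (ξ ^ m - 1))
        = (2 / (m:ℝ)) * Q := by
      have := intervalIntegral.integral_eq_sub_of_hasDeriv_right_of_le (le_of_lt h1r)
        (f := fun ξ : ℝ => (2 / (m:ℝ)) * Real.sqrt (ξ ^ m - 1))
        (f' := fun ξ : ℝ => ξ ^ (m-1) / Real.sqrt (ξ ^ m - 1))
        (by fun_prop) ?_ hgint
      · rw [this]; simp [hQdef]
      · intro x hx
        obtain ⟨hx1, hxr⟩ := hx
        have hp : 0 < x ^ m - 1 := by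
          have := one_lt_pow₀ hx1 hmne; linarith
        have hQx : 0 < Real.sqrt (x ^ m - 1) := Real.sqrt_pos.mpr hp
        have h1 : HasDerivAt (fun y : ℝ => y ^ m - 1) ((m:ℝ) * x ^ (m-1)) x := by
          simpa using (hasDerivAt_pow m x).sub_const 1
        have h2 : HasDerivAt (fun y : ℝ => Real.sqrt (y ^ m - 1))
            (1 / (2 * Real.sqrt (x ^ m - 1)) * ((m:ℝ) * x ^ (m-1))) x :=
          (Real.hasDerivAt_sqrt (ne_of_gt hp)).comp x h1
        have h3 := h2.const_mul (2 / (m:ℝ))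
        have heq : (2 / (m:ℝ)) * (1 / (2 * Real.sqrt (x ^ m - 1)) * ((m:ℝ) * x ^ (m-1)))
            = x ^ (m-1) / Real.sqrt (x ^ m - 1) := by
          field_simp
        rw [heq] at h3
        exact h3.hasDerivWithinAt
    -- upper bound on d
    have hupper : schDist n r ≤ S * ((2 / (m:ℝ)) * Q) := by
      rw [schDist, ← hmdef]
      calc (∫ ξ in (1:ℝ)..r, Real.sqrt (ξ ^ m / (ξ ^ m - 1)))
          ≤ ∫ ξ in (1:ℝ)..r, S * (ξ ^ (m-1) / Real.sqrt (ξ ^ m - 1)) := by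
            apply intervalIntegral.integral_mono_on (le_of_lt h1r) hfint
              (hgint.const_mul S)
            intro ξ hξ
            rcases eq_or_lt_of_le hξ.1 with h | hξ1
            · simp [← h]
            have hp : 0 < ξ ^ m - 1 := (hfact ξ ⟨hξ1, hξ.2⟩).2.2.1
            have hQξ : 0 < Real.sqrt (ξ ^ m - 1) := Real.sqrt_pos.mpr hp
            have hξ0 : (0:ℝ) < ξ := by linarith
            rw [Real.sqrt_div (by positivity), div_le_iff₀ hQξ]
            have he : S * (ξ ^ (m-1) / Real.sqrt (ξ ^ m - 1)) * Real.sqrt (ξ ^ m - 1)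
                = S * ξ ^ (m-1) := by field_simp
            rw [he]
            have h1 : Real.sqrt (ξ ^ m) ≤ S := by
              rw [hSdef]
              exact Real.sqrt_le_sqrt (pow_le_pow_left₀ (by linarith) hξ.2 m)
            have h2 : (1:ℝ) ≤ ξ ^ (m-1) := one_le_pow₀ (le_of_lt hξ1)
            nlinarith
        _ = S * ((2 / (m:ℝ)) * Q) := by
            rw [intervalIntegral.integral_const_mul, hFTC]
    -- lower bound on d
    have hlower : (r ^ (m-1):ℝ)⁻¹ * ((2 / (m:ℝ)) * Q) ≤ schDist n r := by
      rw [schDist, ← hmdef]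
      calc (r ^ (m-1):ℝ)⁻¹ * ((2 / (m:ℝ)) * Q)
          = ∫ ξ in (1:ℝ)..r, (r ^ (m-1):ℝ)⁻¹ * (ξ ^ (m-1) / Real.sqrt (ξ ^ m - 1)) := by
            rw [intervalIntegral.integral_const_mul, hFTC]
        _ ≤ ∫ ξ in (1:ℝ)..r, Real.sqrt (ξ ^ m / (ξ ^ m - 1)) := by
            apply intervalIntegral.integral_mono_on (le_of_lt h1r)
              (hgint.const_mul _) hfint
            intro ξ hξ
            rcases eq_or_lt_of_le hξ.1 with h | hξ1
            · simp [← h]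
            have hp : 0 < ξ ^ m - 1 := (hfact ξ ⟨hξ1, hξ.2⟩).2.2.1
            have hQξ : 0 < Real.sqrt (ξ ^ m - 1) := Real.sqrt_pos.mpr hp
            have hξ0 : (0:ℝ) < ξ := by linarith
            rw [Real.sqrt_div (by positivity)]
            have h1 : ξ ^ (m-1) ≤ r ^ (m-1) := pow_le_pow_left₀ (by linarith) hξ.2 _
            have h2 : (1:ℝ) ≤ Real.sqrt (ξ ^ m) := by
              rw [show (1:ℝ) = Real.sqrt 1 by simp]
              exact Real.sqrt_le_sqrt (one_le_pow₀ (le_of_lt hξ1))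
            calc (r ^ (m-1):ℝ)⁻¹ * (ξ ^ (m-1) / Real.sqrt (ξ ^ m - 1))
                ≤ (r ^ (m-1):ℝ)⁻¹ * (r ^ (m-1) / Real.sqrt (ξ ^ m - 1)) := by
                  exact mul_le_mul_of_nonneg_left ((div_le_div_iff_of_pos_right hQξ).mpr h1) (by positivity)
              _ = 1 / Real.sqrt (ξ ^ m - 1) := by field_simp
              _ ≤ Real.sqrt (ξ ^ m) / Real.sqrt (ξ ^ m - 1) :=
                  (div_le_div_iff_of_pos_right hQξ).mpr h2
    constructor
    · have h := (div_le_div_iff_of_pos_right hδpos).mpr hlower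
      refine le_trans (le_of_eq ?_) h
      rw [hδeq, hlodef]
      field_simp
      ring
    · have h := (div_le_div_iff_of_pos_right hδpos).mpr hupper
      refine le_trans h (le_of_eq ?_)
      have hS2 : S ^ 2 = r ^ m := Real.sq_sqrt (by positivity)
      rw [hδeq, hhidef]
      field_simp
      ring_nf
      rw [Real.sq_sqrt (show (0:ℝ) ≤ r ^ m by positivity)]
  apply tendsto_of_tendsto_of_tendsto_of_le_of_le' hlo hhi
  · exact Filter.eventually_of_mem hmem fun r hr => (key r hr).1
  · exact Filter.eventually_of_mem hmem fun r hr => (key r hr).2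
end

section
/- Let n ≥ 3 be an integer. Then d(r)/δ(r) → 1 as r → ∞. -/
open Filter MeasureTheory

/-!
For `m ≥ 1` and `ξ > 1` we have `1 < ξ ^ m / (ξ ^ m - 1) ≤ 1 + 1 / (ξ - 1)`, so the
integrand of `d` lies between `1` and `1 + (ξ - 1) ^ (-1/2)`. Integrating,
`r - 1 ≤ d(r) ≤ r - 1 + 2 √(r - 1)`, hence `d(r) / r → 1`. For `r ≥ R`, multiplying
`1 - √(1 - r^(2-n))` by its conjugate gives `δ(r) = 2 r / (1 + √(1 - r^(2-n)))`,
hence `δ(r) / r → 1` too.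
-/

open MeasureTheory Topology

section SqrtPowDivPowSubOne

variable {m : ℕ} {ξ : ℝ}

lemma one_le_sqrt_pow_div_pow_sub_one (hm : m ≠ 0) (hξ : 1 < ξ) :
    1 ≤ √(ξ ^ m / (ξ ^ m - 1)) := by
  have h : 1 < ξ ^ m := one_lt_pow₀ hξ hm
  rw [Real.one_le_sqrt, one_le_div (by linarith)]
  linarith

lemma sqrt_pow_div_pow_sub_one_le (hm : m ≠ 0) (hξ : 1 < ξ) :
    √(ξ ^ m / (ξ ^ m - 1)) ≤ 1 + (ξ - 1) ^ (-(1 / 2) : ℝ) := by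
  have hξ₀ : 0 < ξ - 1 := by linarith
  have hpow : ξ ≤ ξ ^ m := le_self_pow₀ hξ.le hm
  have hsq : ((ξ - 1) ^ (-(1 / 2) : ℝ)) ^ 2 = (ξ - 1)⁻¹ := by
    rw [← Real.rpow_natCast, ← Real.rpow_mul hξ₀.le]
    norm_num [Real.rpow_neg_one]
  have hratio : ξ ^ m / (ξ ^ m - 1) ≤ 1 + (ξ - 1)⁻¹ :=
    calc ξ ^ m / (ξ ^ m - 1) = 1 + (ξ ^ m - 1)⁻¹ := by
          field_simp [show ξ ^ m - 1 ≠ 0 by linarith]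
          ring
      _ ≤ 1 + (ξ - 1)⁻¹ := by gcongr
  rw [Real.sqrt_le_left (by positivity)]
  nlinarith [Real.rpow_nonneg hξ₀.le (-(1 / 2) : ℝ)]

end SqrtPowDivPowSubOne

section IntegralSqrtPowDivPowSubOne

lemma intervalIntegrable_sub_rpow {s : ℝ} (hs : -1 < s) (a b : ℝ) :
    IntervalIntegrable (fun ξ : ℝ => (ξ - a) ^ s) volume a b := by
  simpa using (intervalIntegral.intervalIntegrable_rpow' (a := 0) (b := b - a) hs).comp_sub_right a

variable {m : ℕ} {r : ℝ}

lemma intervalIntegrable_one_add_sub_one_rpow_neg_half (r : ℝ) :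
    IntervalIntegrable (fun ξ : ℝ => 1 + (ξ - 1) ^ (-(1 / 2) : ℝ)) volume 1 r :=
  intervalIntegrable_const.add (intervalIntegrable_sub_rpow (by norm_num) 1 r)

lemma integral_one_add_sub_one_rpow_neg_half (r : ℝ) :
    ∫ ξ in (1 : ℝ)..r, 1 + (ξ - 1) ^ (-(1 / 2) : ℝ) = r - 1 + 2 * √(r - 1) := by
  rw [intervalIntegral.integral_add intervalIntegrable_const
      (intervalIntegrable_sub_rpow (by norm_num) 1 r),
    intervalIntegral.integral_comp_sub_right (fun x : ℝ => x ^ (-(1 / 2) : ℝ)),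
    integral_rpow (Or.inl (by norm_num)), Real.sqrt_eq_rpow]
  norm_num
  ring

lemma intervalIntegrable_sqrt_pow_div_pow_sub_one (hm : m ≠ 0) (hr : 1 ≤ r) :
    IntervalIntegrable (fun ξ : ℝ => √(ξ ^ m / (ξ ^ m - 1))) volume 1 r := by
  refine (intervalIntegrable_one_add_sub_one_rpow_neg_half r).mono_fun'
    (Measurable.aestronglyMeasurable (by fun_prop)) ?_
  rw [Set.uIoc_of_le hr]
  filter_upwards [ae_restrict_mem measurableSet_Ioc] with ξ hξ
  rw [Real.norm_of_nonneg (Real.sqrt_nonneg _)]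
  exact sqrt_pow_div_pow_sub_one_le hm hξ.1

lemma sub_one_le_integral_sqrt_pow_div_pow_sub_one (hm : m ≠ 0) (hr : 1 ≤ r) :
    r - 1 ≤ ∫ ξ in (1 : ℝ)..r, √(ξ ^ m / (ξ ^ m - 1)) := by
  simpa using intervalIntegral.integral_mono_on_of_le_Ioo hr intervalIntegrable_const
    (intervalIntegrable_sqrt_pow_div_pow_sub_one hm hr)
    fun ξ hξ => one_le_sqrt_pow_div_pow_sub_one hm hξ.1

lemma integral_sqrt_pow_div_pow_sub_one_le (hm : m ≠ 0) (hr : 1 ≤ r) :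
    ∫ ξ in (1 : ℝ)..r, √(ξ ^ m / (ξ ^ m - 1)) ≤ r - 1 + 2 * √(r - 1) := by
  rw [← integral_one_add_sub_one_rpow_neg_half]
  exact intervalIntegral.integral_mono_on_of_le_Ioo hr
    (intervalIntegrable_sqrt_pow_div_pow_sub_one hm hr)
    (intervalIntegrable_one_add_sub_one_rpow_neg_half r)
    fun ξ hξ => sqrt_pow_div_pow_sub_one_le hm hξ.1

lemma tendsto_integral_sqrt_pow_div_pow_sub_one_div_atTop (hm : m ≠ 0) :
    Tendsto (fun r => (∫ ξ in (1 : ℝ)..r, √(ξ ^ m / (ξ ^ m - 1))) / r) atTop (𝓝 1) := by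
  have hlower : Tendsto (fun r : ℝ => 1 - r⁻¹) atTop (𝓝 1) := by
    simpa using tendsto_const_nhds.sub (tendsto_inv_atTop_zero (𝕜 := ℝ))
  have hupper : Tendsto (fun r : ℝ => 1 + 2 * (√r)⁻¹) atTop (𝓝 1) := by
    have h := (tendsto_inv_atTop_zero (𝕜 := ℝ)).comp Real.tendsto_sqrt_atTop
    simpa using (h.const_mul 2).const_add 1
  refine tendsto_of_tendsto_of_tendsto_of_le_of_le' hlower hupper ?_ ?_ <;>
    filter_upwards [eventually_ge_atTop 1] with r hr
  · rw [le_div_iff₀ (by linarith), sub_mul, inv_mul_cancel₀ (by linarith), one_mul]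
    exact sub_one_le_integral_sqrt_pow_div_pow_sub_one hm hr
  · have hsqrt : √(r - 1) ≤ √r := Real.sqrt_le_sqrt (by linarith)
    rw [div_le_iff₀ (by linarith)]
    calc _ ≤ r - 1 + 2 * √(r - 1) := integral_sqrt_pow_div_pow_sub_one_le hm hr
      _ ≤ (1 + 2 * (√r)⁻¹) * r := by
        rw [add_mul, one_mul, mul_assoc, inv_mul_eq_div, Real.div_sqrt]
        linarith

end IntegralSqrtPowDivPowSubOne

lemma mul_one_sub_sqrt_sub_one_div_self {x : ℝ} (hx : 1 ≤ x) :
    x * (1 - √((x - 1) / x)) = (1 + √((x - 1) / x))⁻¹ := by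
  set s := √((x - 1) / x)
  have hs : s ^ 2 = (x - 1) / x := Real.sq_sqrt (div_nonneg (by linarith) (by linarith))
  refine eq_inv_of_mul_eq_one_left ?_
  calc x * (1 - s) * (1 + s) = x * (1 - s ^ 2) := by ring
    _ = 1 := by
      rw [hs]
      field_simp
      ring

lemma tendsto_sqrt_sub_one_div_self_atTop :
    Tendsto (fun x : ℝ => √((x - 1) / x)) atTop (𝓝 1) := by
  have h : Tendsto (fun x : ℝ => 1 - x⁻¹) atTop (𝓝 1) := by
    simpa using tendsto_const_nhds.sub (tendsto_inv_atTop_zero (𝕜 := ℝ))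
  have hratio : Tendsto (fun x : ℝ => (x - 1) / x) atTop (𝓝 1) := by
    refine h.congr' ?_
    filter_upwards [eventually_ne_atTop 0] with x hx
    rw [sub_div, div_self hx, one_div]
  simpa using hratio.sqrt

lemma schDelta_eq_of_schR_le {n : ℕ} {r : ℝ} (hn : 2 ≤ n) (hR : schR n ≤ r) (hr : 1 ≤ r) :
    schDelta n r = 2 * r / (1 + √((r ^ (n - 2) - 1) / r ^ (n - 2))) := by
  have hpow : r ^ (n - 1) = r * r ^ (n - 2) := by
    rw [← pow_succ']
    congr 1
    omega
  rw [schDelta, if_neg hR.not_gt, hpow, mul_assoc, mul_assoc,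
    mul_one_sub_sqrt_sub_one_div_self (one_le_pow₀ hr)]
  ring

lemma tendsto_schDelta_div_atTop {n : ℕ} (hn : 3 ≤ n) :
    Tendsto (fun r => schDelta n r / r) atTop (𝓝 1) := by
  have hsqrt : Tendsto (fun r : ℝ => √((r ^ (n - 2) - 1) / r ^ (n - 2))) atTop (𝓝 1) :=
    tendsto_sqrt_sub_one_div_self_atTop.comp (tendsto_pow_atTop (by omega))
  have h : Tendsto (fun r => 2 / (1 + √((r ^ (n - 2) - 1) / r ^ (n - 2)))) atTop (𝓝 1) := by
    simpa [one_add_one_eq_two, Pi.div_def] using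
      (tendsto_const_nhds (x := (2 : ℝ))).div (hsqrt.const_add 1) (by norm_num)
  refine h.congr' ?_
  filter_upwards [eventually_ge_atTop (schR n), eventually_gt_atTop 1] with r hR hr
  rw [schDelta_eq_of_schR_le (by omega) hR hr.le]
  field_simp

/-- `d(r)/δ(r) → 1` as `r → ∞`. -/
theorem schDist_div_schDelta_tendsto_atTop (n : ℕ) (hn : 3 ≤ n) :
    Filter.Tendsto (fun r : ℝ => schDist n r / schDelta n r) Filter.atTop (nhds 1) := by
  have h := (tendsto_integral_sqrt_pow_div_pow_sub_one_div_atTop (show n - 2 ≠ 0 by omega)).div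
    (tendsto_schDelta_div_atTop hn) one_ne_zero
  rw [div_one] at h
  refine h.congr' ?_
  filter_upwards [eventually_ne_atTop 0] with r hr
  exact div_div_div_cancel_right₀ hr _ _
end

section
/- Let n ≥ 3 be an integer. Then d(r) = (2/√(n−2)) √(r−1) + o(√(r−1)) as r → 1⁺ (i.e. (d(r) − (2/√(n−2))√(r−1))/√(r−1) → 0 as r → 1⁺), and d(r)/r → 1 as r → ∞. -/
open Filter

/-!
Since `ξ^m - 1 = (ξ - 1) ∑_{k<m} ξ^k`, the integrand is `g ξ / √(ξ - 1)` with `g` continuous on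
`[0, ∞)` and `g 1 = 1/√m`. As `∫₁^r dξ/√(ξ - 1) = 2√(r - 1)`, replacing `g ξ` by `g 1` near `1`
costs only `o(√(r - 1))`. At infinity the integrand tends to `1`, and the integral of a function
with limit `L` grows like `L r`.
-/

open MeasureTheory Set Asymptotics Topology

section InvSqrtSingularity

variable {a b : ℝ}

lemma inv_sqrt_sub_eq_rpow {x : ℝ} (hx : a ≤ x) : (√(x - a))⁻¹ = (x - a) ^ (-(1 / 2) : ℝ) := by
  rw [Real.sqrt_eq_rpow, Real.rpow_neg (sub_nonneg.2 hx)]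

lemma intervalIntegrable_inv_sqrt_sub (hab : a ≤ b) :
    IntervalIntegrable (fun x => (√(x - a))⁻¹) volume a b := by
  have h := (intervalIntegral.intervalIntegrable_rpow' (r := -(1 / 2)) (a := 0) (b := b - a)
    (by norm_num)).comp_sub_right a
  rw [zero_add, sub_add_cancel] at h
  refine h.congr fun x hx => ?_
  rw [uIoc_of_le hab] at hx
  exact (inv_sqrt_sub_eq_rpow hx.1.le).symm

lemma integral_inv_sqrt_sub (hab : a ≤ b) : ∫ x in a..b, (√(x - a))⁻¹ = 2 * √(b - a) := by
  rw [intervalIntegral.integral_congr fun x hx => inv_sqrt_sub_eq_rpow (a := a) (x := x)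
      (by rw [uIcc_of_le hab] at hx; exact hx.1),
    intervalIntegral.integral_comp_sub_right (fun x => x ^ (-(1 / 2) : ℝ)), sub_self,
    integral_rpow (Or.inl (by norm_num)), Real.sqrt_eq_rpow]
  norm_num
  ring

lemma intervalIntegrable_div_sqrt_sub {g : ℝ → ℝ} (hab : a ≤ b) (hg : ContinuousOn g (Icc a b)) :
    IntervalIntegrable (fun x => g x / √(x - a)) volume a b := by
  simpa only [div_eq_mul_inv] using
    (intervalIntegrable_inv_sqrt_sub hab).continuousOn_mul (by rwa [uIcc_of_le hab])

lemma abs_integral_div_sqrt_sub_sub_le {g : ℝ → ℝ} {c ε : ℝ} (hab : a ≤ b)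
    (hg : ContinuousOn g (Icc a b)) (hgc : ∀ x ∈ Icc a b, |g x - c| ≤ ε) :
    |(∫ x in a..b, g x / √(x - a)) - 2 * c * √(b - a)| ≤ 2 * ε * √(b - a) := by
  have hinv := intervalIntegrable_inv_sqrt_sub hab
  have hdiff : (∫ x in a..b, g x / √(x - a)) - 2 * c * √(b - a)
      = ∫ x in a..b, (g x - c) * (√(x - a))⁻¹ := by
    simp only [sub_mul]
    rw [intervalIntegral.integral_sub
      (by simpa only [div_eq_mul_inv] using intervalIntegrable_div_sqrt_sub hab hg)
      (hinv.const_mul c),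
      intervalIntegral.integral_const_mul, integral_inv_sqrt_sub hab]
    simp only [div_eq_mul_inv]
    ring
  calc |(∫ x in a..b, g x / √(x - a)) - 2 * c * √(b - a)|
      ≤ ∫ x in a..b, ε * (√(x - a))⁻¹ := by
        rw [hdiff, ← Real.norm_eq_abs]
        refine intervalIntegral.norm_integral_le_of_norm_le hab
          (Eventually.of_forall fun x hx => ?_) (hinv.const_mul ε)
        rw [norm_mul, Real.norm_eq_abs, Real.norm_of_nonneg (by positivity)]
        exact mul_le_mul_of_nonneg_right (hgc x (Ioc_subset_Icc_self hx)) (by positivity)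
    _ = 2 * ε * √(b - a) := by
        rw [intervalIntegral.integral_const_mul, integral_inv_sqrt_sub hab]
        ring

theorem integral_div_sqrt_sub_isLittleO {g : ℝ → ℝ} (hg : ContinuousOn g (Ici a)) :
    (fun r => (∫ x in a..r, g x / √(x - a)) - 2 * g a * √(r - a)) =o[𝓝[>] a]
      fun r => √(r - a) := by
  refine isLittleO_iff.2 fun ε hε => ?_
  obtain ⟨δ, hδ, hgδ⟩ :=
    Metric.continuousWithinAt_iff.1 (hg a self_mem_Ici) (ε / 2) (by positivity)
  filter_upwards [Ioo_mem_nhdsGT (show a < a + δ by linarith)] with r hr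
  have hgc : ∀ x ∈ Icc a r, |g x - g a| ≤ ε / 2 := fun x hx =>
    (hgδ hx.1 (by rw [Real.dist_eq, abs_of_nonneg (by linarith [hx.1])]; linarith [hx.2, hr.2])).le
  rw [Real.norm_eq_abs, Real.norm_of_nonneg (Real.sqrt_nonneg _)]
  calc _ ≤ 2 * (ε / 2) * √(r - a) :=
        abs_integral_div_sqrt_sub_sub_le hr.1.le (hg.mono Icc_subset_Ici_self) hgc
    _ = ε * √(r - a) := by ring

end InvSqrtSingularity

section IntegralAverage

variable {f : ℝ → ℝ} {a L : ℝ}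

theorem integral_sub_isLittleO_atTop (hf : ∀ b ≥ a, IntervalIntegrable f volume a b)
    (hlim : Tendsto f atTop (𝓝 L)) :
    (fun r => ∫ x in a..r, (f x - L)) =o[atTop] id := by
  refine isLittleO_iff.2 fun ε hε => ?_
  obtain ⟨b, hb⟩ := eventually_atTop.1 <|
    (Metric.tendsto_nhds.1 hlim (ε / 2) (by positivity)).and (eventually_ge_atTop (max a 0))
  have hfL : ∀ c ≥ a, IntervalIntegrable (fun x => f x - L) volume a c := fun c hc =>
    (hf c hc).sub intervalIntegrable_const
  have hba : a ≤ b := (le_max_left a 0).trans (hb b le_rfl).2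
  have hb0 : 0 ≤ b := (le_max_right a 0).trans (hb b le_rfl).2
  set C := ∫ x in a..b, (f x - L)
  filter_upwards [eventually_ge_atTop b, eventually_ge_atTop (2 * |C| / ε)] with r hrb hrC
  have htail : ‖∫ x in b..r, (f x - L)‖ ≤ ε / 2 * r := by
    calc ‖∫ x in b..r, (f x - L)‖ ≤ ε / 2 * |r - b| := by
          refine intervalIntegral.norm_integral_le_of_norm_le_const fun x hx => ?_
          rw [uIoc_of_le hrb] at hx
          exact (hb x hx.1.le).1.le
      _ ≤ ε / 2 * r := by rw [abs_of_nonneg (by linarith)]; nlinarith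
  have hsplit : ∫ x in a..r, (f x - L) = C + ∫ x in b..r, (f x - L) := by
    rw [← intervalIntegral.integral_interval_sub_left (hfL r (hba.trans hrb)) (hfL b hba)]
    ring
  rw [id, Real.norm_of_nonneg (hb0.trans hrb), hsplit]
  have : 2 * |C| ≤ ε * r := by rwa [div_le_iff₀' hε] at hrC
  linarith [norm_add_le C (∫ x in b..r, (f x - L)), Real.norm_eq_abs C]

theorem tendsto_integral_div_atTop (hf : ∀ b ≥ a, IntervalIntegrable f volume a b)
    (hlim : Tendsto f atTop (𝓝 L)) :
    Tendsto (fun r => (∫ x in a..r, f x) / r) atTop (𝓝 L) := by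
  have hlin : Tendsto (fun r => L * (1 - a / r)) atTop (𝓝 L) := by
    simpa using (tendsto_const_nhds (x := L)).mul
      ((tendsto_const_nhds (x := (1:ℝ))).sub (tendsto_const_nhds.div_atTop tendsto_id))
  rw [← zero_add L]
  refine ((integral_sub_isLittleO_atTop hf hlim).tendsto_div_nhds_zero.add hlin).congr' ?_
  filter_upwards [eventually_gt_atTop (max a 0)] with r hr
  have hr0 : r ≠ 0 := ((le_max_right a 0).trans_lt hr).ne'
  rw [intervalIntegral.integral_sub (hf r ((le_max_left a 0).trans hr.le))
    intervalIntegrable_const, intervalIntegral.integral_const, smul_eq_mul, id]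
  field_simp
  ring

end IntegralAverage

lemma sqrt_pow_div_pow_sub_one_eq (m : ℕ) {x : ℝ} (hx : 0 ≤ x) :
    √(x ^ m / (x ^ m - 1)) = √(x ^ m / ∑ k ∈ Finset.range m, x ^ k) / √(x - 1) := by
  rw [← geom_sum_mul x m, ← div_div, Real.sqrt_div (by positivity)]

lemma continuousOn_sqrt_pow_div_geom_sum {m : ℕ} (hm : m ≠ 0) :
    ContinuousOn (fun x : ℝ => √(x ^ m / ∑ k ∈ Finset.range m, x ^ k)) (Ici 0) :=
  ((continuousOn_pow m).div (continuous_finsetSum _ fun k _ => continuous_pow k).continuousOn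
    fun _ hx => (geom_sum_pos hx hm).ne').sqrt

lemma tendsto_div_sub_one_atTop : Tendsto (fun y : ℝ => y / (y - 1)) atTop (𝓝 1) := by
  have h : Tendsto (fun y : ℝ => 1 + (y - 1)⁻¹) atTop (𝓝 (1 + 0)) :=
    tendsto_const_nhds.add
      (tendsto_inv_atTop_zero.comp (tendsto_atTop_add_const_right _ (-1) tendsto_id))
  rw [add_zero] at h
  refine h.congr' ?_
  filter_upwards [eventually_gt_atTop 1] with y hy
  field_simp [(sub_pos.2 hy).ne']
  ring

lemma tendsto_sqrt_pow_div_pow_sub_one {m : ℕ} (hm : m ≠ 0) :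
    Tendsto (fun x : ℝ => √(x ^ m / (x ^ m - 1))) atTop (𝓝 1) :=
  (Real.continuous_sqrt.tendsto' 1 1 Real.sqrt_one).comp
    (tendsto_div_sub_one_atTop.comp (tendsto_pow_atTop hm))

lemma schDist_eq_integral_div_sqrt (n : ℕ) {r : ℝ} (hr : 1 ≤ r) :
    schDist n r = ∫ x in 1..r, √(x ^ (n - 2) / ∑ k ∈ Finset.range (n - 2), x ^ k) / √(x - 1) :=
  intervalIntegral.integral_congr fun x hx =>
    sqrt_pow_div_pow_sub_one_eq _ (by rw [uIcc_of_le hr] at hx; linarith [hx.1])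

/-- `d(r) = (2/√(n−2)) √(r−1) + o(√(r−1))` as `r → 1⁺`,
and `d(r)/r → 1` as `r → ∞`. -/
theorem schDist_asymptotics (n : ℕ) (hn : 3 ≤ n) :
    Filter.Tendsto
      (fun r : ℝ =>
        (schDist n r - 2 / Real.sqrt ((n : ℝ) - 2) * Real.sqrt (r - 1)) / Real.sqrt (r - 1))
      (nhdsWithin 1 (Set.Ioi 1)) (nhds 0) ∧
    Filter.Tendsto (fun r : ℝ => schDist n r / r) Filter.atTop (nhds 1) := by
  have hm : n - 2 ≠ 0 := by omega
  set g : ℝ → ℝ := fun x => √(x ^ (n - 2) / ∑ k ∈ Finset.range (n - 2), x ^ k)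
  have hg : ContinuousOn g (Ici 1) :=
    (continuousOn_sqrt_pow_div_geom_sum hm).mono (Ici_subset_Ici.2 zero_le_one)
  have hg1 : 2 / √((n : ℝ) - 2) = 2 * g 1 := by
    simp [g, Real.sqrt_inv, Nat.cast_sub (by omega : 2 ≤ n), div_eq_mul_inv]
  constructor
  · refine (integral_div_sqrt_sub_isLittleO hg).tendsto_div_nhds_zero.congr' ?_
    filter_upwards [self_mem_nhdsWithin] with r hr
    rw [schDist_eq_integral_div_sqrt n (le_of_lt hr), hg1]
  · have hlim : Tendsto (fun x => g x / √(x - 1)) atTop (𝓝 1) :=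
      (tendsto_sqrt_pow_div_pow_sub_one hm).congr' <| by
        filter_upwards [eventually_ge_atTop 0] with x hx using sqrt_pow_div_pow_sub_one_eq _ hx
    refine (tendsto_integral_div_atTop (fun b hb => intervalIntegrable_div_sqrt_sub hb
      (hg.mono Icc_subset_Ici_self)) hlim).congr' ?_
    filter_upwards [eventually_ge_atTop 1] with r hr
    rw [schDist_eq_integral_div_sqrt n hr]
end

section
/- Let n ≥ 3 be an integer and let g : (1,∞) → ℝ be locally absolutely continuous with g(r)² rⁿ → 0 as r → ∞. Then (1/2) ∫₁^∞ g(r)² r^{n−1} √(r^{n−2}/(r^{n−2}−1)) dr ≤ (∫₁^∞ s(r)² g(r)² r^{n−1} √(r^{n−2}/(r^{n−2}−1)) dr)^{1/2} · (∫₁^∞ g'(r)² r^{n−1} √((r^{n−2}−1)/r^{n−2}) dr)^{1/2}. -/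
open MeasureTheory Filter

/-- The induced distance from the event horizon:
`s(r) = r^(−(n−1)) ∫₁^r √(ξ^(n−2)/(ξ^(n−2)−1)) ξ^(n−1) dξ`. -/
noncomputable def schS (n : ℕ) (r : ℝ) : ℝ :=
  (∫ ξ in (1 : ℝ)..r, Real.sqrt (ξ ^ (n - 2) / (ξ ^ (n - 2) - 1)) * ξ ^ (n - 1)) / r ^ (n - 1)

/-! With `ρ(r) = r^(n-1) √(r^(n-2)/(r^(n-2)-1))` (`schDensity n`) the weight on the left and
`S(r) = ∫₁^r ρ`, we have `S' = ρ` a.e., so integrating `g²` against `S'` by parts on `[a, b] ⊂ (1, ∞)` gives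
`∫ₐᵇ g² ρ ≤ g(b)² S(b) + 2 ∫ₐᵇ |g g'| S`. Since `S(b) = O(bⁿ)`, the boundary term vanishes as
`b → ∞`, and letting `a → 1` yields `∫₁^∞ g² ρ ≤ 2 ∫₁^∞ |g g'| S`. Finally `S = s r^(n-1)` and the
two weights on the right multiply to `1`, so Cauchy–Schwarz splits `|g g'| S` into the two
factors of the right-hand side. -/

open Set Topology
open scoped ENNReal

namespace AbsolutelyContinuousOnInterval

theorem congr {f g : ℝ → ℝ} {a b : ℝ} (hf : AbsolutelyContinuousOnInterval f a b)
    (hfg : EqOn f g (uIcc a b)) : AbsolutelyContinuousOnInterval g a b := by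
  refine Tendsto.congr' ?_ hf
  rw [EventuallyEq, eventually_inf_principal]
  filter_upwards with E hE
  exact Finset.sum_congr rfl fun i hi => by rw [hfg (hE.1 i hi).1, hfg (hE.1 i hi).2]

theorem of_eq_add_integral {f f' : ℝ → ℝ} {a b : ℝ} (hab : a ≤ b)
    (hf' : IntegrableOn f' (Icc a b)) (hf : ∀ x ∈ Icc a b, f x = f a + ∫ t in a..x, f' t) :
    AbsolutelyContinuousOnInterval f a b := by
  have hprim := ((intervalIntegrable_iff_integrableOn_Icc_of_le hab).mpr hf'
    ).absolutelyContinuousOnInterval_intervalIntegral left_mem_uIcc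
  refine ((LipschitzWith.const (f a)).lipschitzOnWith.absolutelyContinuousOnInterval.add
    hprim).congr ?_
  rw [uIcc_of_le hab]
  exact fun x hx => (hf x hx).symm

theorem continuousOn_Ioi {f : ℝ → ℝ} {c : ℝ}
    (hf : ∀ a b, c < a → a ≤ b → AbsolutelyContinuousOnInterval f a b) :
    ContinuousOn f (Ioi c) := by
  intro x hx
  have hx : c < x := hx
  have hnhds : uIcc ((c + x) / 2) (x + 1) ∈ 𝓝 x := by
    rw [uIcc_of_le (by linarith)]
    exact Icc_mem_nhds (by linarith) (by linarith)
  exact ((hf _ _ (by linarith) (by linarith)).continuousOn.continuousAt hnhds).continuousWithinAt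

theorem integral_sq_mul_deriv_le {f S : ℝ → ℝ} {a b : ℝ} (hab : a ≤ b)
    (hf : AbsolutelyContinuousOnInterval f a b) (hS : AbsolutelyContinuousOnInterval S a b)
    (hS_nonneg : ∀ x ∈ Icc a b, 0 ≤ S x) :
    ∫ x in a..b, f x ^ 2 * deriv S x
      ≤ f b ^ 2 * S b + 2 * ∫ x in a..b, |f x * deriv f x| * S x := by
  have hf2 : AbsolutelyContinuousOnInterval (fun x => f x ^ 2) a b := by
    simpa only [sq] using hf.fun_mul hf
  have hfc : ContinuousOn f (uIcc a b) := hf.continuousOn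
  have hSc : ContinuousOn S (uIcc a b) := hS.continuousOn
  have hparts := hf2.integral_deriv_mul_eq_sub hS
  have hderiv : ∀ᵐ x, x ∈ uIoc a b →
      deriv (fun y => f y ^ 2) x * S x + f x ^ 2 * deriv S x
        = 2 * (f x * deriv f x * S x) + f x ^ 2 * deriv S x := by
    filter_upwards [hf.ae_differentiableAt] with x hdiff hx
    rw [((hdiff (uIoc_subset_uIcc hx)).hasDerivAt.fun_pow 2).deriv]
    push_cast
    ring
  have hint₁ : IntervalIntegrable (fun x => f x * deriv f x * S x) volume a b :=
    (hf.intervalIntegrable_deriv.continuousOn_mul hfc).mul_continuousOn hSc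
  have hint₂ : IntervalIntegrable (fun x => f x ^ 2 * deriv S x) volume a b :=
    hS.intervalIntegrable_deriv.continuousOn_mul (hfc.pow 2)
  rw [intervalIntegral.integral_congr_ae hderiv, intervalIntegral.integral_add
    (hint₁.const_mul 2) hint₂, intervalIntegral.integral_const_mul] at hparts
  have habs : -∫ x in a..b, |f x * deriv f x| * S x ≤ ∫ x in a..b, f x * deriv f x * S x := by
    rw [← intervalIntegral.integral_neg]
    refine intervalIntegral.integral_mono_on hab ?_ hint₁ fun x hx => ?_
    · exact ((hf.intervalIntegrable_deriv.continuousOn_mul hfc).abs.mul_continuousOn hSc).neg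
    · rw [neg_mul_eq_neg_mul]
      exact mul_le_mul_of_nonneg_right (neg_abs_le _) (hS_nonneg x hx)
  nlinarith [mul_nonneg (sq_nonneg (f a)) (hS_nonneg a (left_mem_Icc.mpr hab))]

end AbsolutelyContinuousOnInterval

theorem IntervalIntegrable.absolutelyContinuousOnInterval_primitive {h : ℝ → ℝ} {a b c : ℝ}
    (hh : IntervalIntegrable h volume c b) (hca : c ≤ a) (hab : a ≤ b) :
    AbsolutelyContinuousOnInterval (fun x => ∫ t in c..x, h t) a b :=
  (hh.absolutelyContinuousOnInterval_intervalIntegral left_mem_uIcc).mono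
    (uIcc_subset_uIcc (mem_uIcc_of_le hca hab) right_mem_uIcc)

theorem lintegral_Ioi_le_of_forall_lintegral_Ioc_le {c : ℝ} {F R : ℝ → ℝ≥0∞} {L : ℝ≥0∞}
    (hF : AEMeasurable F (volume.restrict (Ioi c))) (hR : Tendsto R atTop (𝓝 L))
    (h : ∀ a b, c < a → a ≤ b → ∫⁻ x in Ioc a b, F x ≤ R b) :
    ∫⁻ x in Ioi c, F x ≤ L := by
  have hcover : AECover (volume.restrict (Ioi c)) (𝓝[>] c ×ˢ atTop)
      (fun p : ℝ × ℝ => Ioc p.1 p.2) :=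
    (aecover_Ioi_of_Ioi ((tendsto_id.mono_left nhdsWithin_le_nhds).comp tendsto_fst)).inter
      (aecover_Iic tendsto_snd)
  refine le_of_tendsto_of_tendsto (hcover.lintegral_tendsto_of_countably_generated hF)
    (hR.comp tendsto_snd) ?_
  have hfst : ∀ᶠ a in 𝓝[>] c, c < a ∧ a ≤ c + 1 :=
    inter_mem self_mem_nhdsWithin (mem_nhdsWithin_of_mem_nhds (Iic_mem_nhds (by linarith)))
  filter_upwards [prod_mem_prod hfst (eventually_ge_atTop (c + 1))] with p hp
  obtain ⟨⟨hca, ha⟩, hb⟩ := hp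
  calc ∫⁻ x in Ioc p.1 p.2, F x ∂volume.restrict (Ioi c)
      ≤ ∫⁻ x in Ioc p.1 p.2, F x :=
        lintegral_mono' ((Measure.restrict_comm measurableSet_Ioc).le.trans
          Measure.restrict_le_self) le_rfl
    _ ≤ R p.2 := h _ _ hca (ha.trans hb)

theorem lintegral_Ioc_sq_mul_le {a b c : ℝ} {g h : ℝ → ℝ} (hca : c < a) (hab : a ≤ b)
    (hh_nonneg : ∀ x ∈ Ioc c b, 0 ≤ h x) (hh_int : IntervalIntegrable h volume c b)
    (hg : AbsolutelyContinuousOnInterval g a b) :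
    ∫⁻ x in Ioc a b, ENNReal.ofReal (g x ^ 2 * h x)
      ≤ ENNReal.ofReal (g b ^ 2 * ∫ t in c..b, h t)
        + 2 * ∫⁻ x in Ioc a b, ENNReal.ofReal (|g x * deriv g x| * ∫ t in c..x, h t) := by
  set S : ℝ → ℝ := fun x => ∫ t in c..x, h t
  have hsub : Ioc a b ⊆ Ioc c b := Ioc_subset_Ioc_left hca.le
  have hsub' : uIcc a b ⊆ uIcc c b := uIcc_subset_uIcc (mem_uIcc_of_le hca.le hab) right_mem_uIcc
  have hS_nonneg : ∀ x ∈ Icc a b, 0 ≤ S x := fun x hx => by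
    simp only [S, intervalIntegral.integral_of_le (hca.le.trans hx.1)]
    exact setIntegral_nonneg measurableSet_Ioc fun t ht => hh_nonneg t ⟨ht.1, ht.2.trans hx.2⟩
  have hS_ac := hh_int.absolutelyContinuousOnInterval_primitive hca.le hab
  have hS_deriv : ∀ᵐ x, x ∈ uIoc a b → g x ^ 2 * deriv S x = g x ^ 2 * h x := by
    filter_upwards [hh_int.ae_hasDerivAt_integral] with x hx hxab
    rw [(hx (hsub' (uIoc_subset_uIcc hxab)) c left_mem_uIcc).deriv]
  have hint₁ : IntegrableOn (fun x => g x ^ 2 * h x) (Ioc a b) :=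
    ((hh_int.mono_set hsub').continuousOn_mul (hg.continuousOn.pow 2)).1
  have hint₂ : IntegrableOn (fun x => |g x * deriv g x| * S x) (Ioc a b) :=
    (((hg.intervalIntegrable_deriv.continuousOn_mul hg.continuousOn).abs).mul_continuousOn
      hS_ac.continuousOn).1
  have hkey := hg.integral_sq_mul_deriv_le hab hS_ac hS_nonneg
  rw [intervalIntegral.integral_congr_ae hS_deriv, intervalIntegral.integral_of_le hab,
    intervalIntegral.integral_of_le hab] at hkey
  calc ∫⁻ x in Ioc a b, ENNReal.ofReal (g x ^ 2 * h x)
      = ENNReal.ofReal (∫ x in Ioc a b, g x ^ 2 * h x) :=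
        (ofReal_integral_eq_lintegral_ofReal hint₁ ((ae_restrict_mem measurableSet_Ioc).mono
          fun x hx => mul_nonneg (sq_nonneg _) (hh_nonneg x (hsub hx)))).symm
    _ ≤ ENNReal.ofReal (g b ^ 2 * S b)
          + 2 * ENNReal.ofReal (∫ x in Ioc a b, |g x * deriv g x| * S x) := by
        grw [hkey, ENNReal.ofReal_add_le, ENNReal.ofReal_mul zero_le_two, ENNReal.ofReal_ofNat]
    _ = _ := by
        rw [ofReal_integral_eq_lintegral_ofReal hint₂ ((ae_restrict_mem measurableSet_Ioc).mono
          fun x hx => mul_nonneg (abs_nonneg _) (hS_nonneg x (Ioc_subset_Icc_self hx)))]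

theorem lintegral_sq_mul_le_two_mul_lintegral {c : ℝ} {g h : ℝ → ℝ}
    (hh_nonneg : ∀ x ∈ Ioi c, 0 ≤ h x) (hh_int : ∀ b, c < b → IntervalIntegrable h volume c b)
    (hg : ∀ a b, c < a → a ≤ b → AbsolutelyContinuousOnInterval g a b)
    (hlim : Tendsto (fun r => g r ^ 2 * ∫ t in c..r, h t) atTop (𝓝 0)) :
    ∫⁻ x in Ioi c, ENNReal.ofReal (g x ^ 2 * h x)
      ≤ 2 * ∫⁻ x in Ioi c, ENNReal.ofReal (|g x * deriv g x| * ∫ t in c..x, h t) := by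
  set B := ∫⁻ x in Ioi c, ENNReal.ofReal (|g x * deriv g x| * ∫ t in c..x, h t)
  have hh_meas : AEMeasurable h (volume.restrict (Ioi c)) :=
    aemeasurable_Ioi_of_forall_Ioc fun b hb => (hh_int b hb).1.aemeasurable
  refine lintegral_Ioi_le_of_forall_lintegral_Ioc_le
    (R := fun b => ENNReal.ofReal (g b ^ 2 * ∫ t in c..b, h t) + 2 * B)
    ((((AbsolutelyContinuousOnInterval.continuousOn_Ioi hg).pow 2).aemeasurable
      measurableSet_Ioi).mul hh_meas).ennreal_ofReal
    (by simpa using (ENNReal.tendsto_ofReal hlim).add_const (2 * B)) fun a b hca hab => ?_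
  have hsub : Ioc a b ⊆ Ioi c := fun x hx => hca.trans hx.1
  grw [lintegral_Ioc_sq_mul_le hca hab (fun x hx => hh_nonneg x hx.1)
    (hh_int b (hca.trans_le hab)) (hg a b hca hab), lintegral_mono_set hsub]

theorem lintegral_ofReal_abs_mul_abs_le {α : Type*} [MeasurableSpace α] {μ : Measure α}
    {u v : α → ℝ} (hu : AEMeasurable u μ) (hv : AEMeasurable v μ) :
    ∫⁻ x, ENNReal.ofReal (|u x| * |v x|) ∂μ ≤
      (∫⁻ x, ENNReal.ofReal (u x ^ 2) ∂μ) ^ (1 / 2 : ℝ)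
        * (∫⁻ x, ENNReal.ofReal (v x ^ 2) ∂μ) ^ (1 / 2 : ℝ) := by
  have hsq : ∀ y : ℝ, ENNReal.ofReal |y| ^ (2 : ℝ) = ENNReal.ofReal (y ^ 2) := fun y => by
    rw [ENNReal.ofReal_rpow_of_nonneg (abs_nonneg y) zero_le_two, Real.rpow_two, sq_abs]
  have h := ENNReal.lintegral_mul_le_Lp_mul_Lq μ Real.HolderConjugate.two_two
    hu.abs.ennreal_ofReal hv.abs.ennreal_ofReal
  simpa only [Pi.mul_apply, ← ENNReal.ofReal_mul (abs_nonneg _), hsq] using h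

noncomputable def schDensity (n : ℕ) (ξ : ℝ) : ℝ :=
  Real.sqrt (ξ ^ (n - 2) / (ξ ^ (n - 2) - 1)) * ξ ^ (n - 1)

theorem schDensity_nonneg (n : ℕ) {ξ : ℝ} (hξ : 0 ≤ ξ) : 0 ≤ schDensity n ξ :=
  mul_nonneg (Real.sqrt_nonneg _) (pow_nonneg hξ _)

section

variable {n : ℕ} (hn : 3 ≤ n)
include hn

theorem schDensity_le_mul_rpow_neg_half {ξ b : ℝ} (hξ : 1 < ξ) (hξb : ξ ≤ b) :
    schDensity n ξ ≤ Real.sqrt (b ^ (n - 2)) * b ^ (n - 1) * (ξ - 1) ^ (-(1 / 2) : ℝ) := by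
  have hξ0 : 0 ≤ ξ := by linarith
  have hb0 : 0 ≤ b := by linarith
  have hle : ξ - 1 ≤ ξ ^ (n - 2) - 1 := by linarith [le_self_pow₀ hξ.le (by omega : n - 2 ≠ 0)]
  calc schDensity n ξ ≤ Real.sqrt (b ^ (n - 2) / (ξ - 1)) * b ^ (n - 1) := by
        refine mul_le_mul (Real.sqrt_le_sqrt ?_) (pow_le_pow_left₀ hξ0 hξb _) (by positivity)
          (Real.sqrt_nonneg _)
        exact div_le_div₀ (by positivity) (pow_le_pow_left₀ hξ0 hξb _) (by linarith) hle
    _ = _ := by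
        rw [Real.sqrt_div' _ (by linarith), Real.rpow_neg (by linarith), ← Real.sqrt_eq_rpow]
        ring

theorem intervalIntegrable_schDensity {b : ℝ} (hb : 1 ≤ b) :
    IntervalIntegrable (schDensity n) volume 1 b := by
  have hdom : IntervalIntegrable
      (fun ξ : ℝ => Real.sqrt (b ^ (n - 2)) * b ^ (n - 1) * (ξ - 1) ^ (-(1 / 2) : ℝ))
      volume 1 b := by
    have h := ((intervalIntegral.intervalIntegrable_rpow' (a := 0) (b := b - 1)
      (by norm_num : (-1 : ℝ) < -(1 / 2))).comp_sub_right 1).const_mul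
      (Real.sqrt (b ^ (n - 2)) * b ^ (n - 1))
    rwa [zero_add, sub_add_cancel] at h
  have hmeas : Measurable (schDensity n) := by unfold schDensity; fun_prop
  refine hdom.mono_fun' hmeas.aestronglyMeasurable ?_
  filter_upwards [ae_restrict_mem measurableSet_uIoc] with ξ hξ
  rw [uIoc_of_le hb] at hξ
  rw [Real.norm_of_nonneg (schDensity_nonneg n (by linarith [hξ.1]))]
  exact schDensity_le_mul_rpow_neg_half hn hξ.1 hξ.2

theorem schDensity_le_sqrt_two_mul {ξ : ℝ} (hξ : 2 ≤ ξ) :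
    schDensity n ξ ≤ Real.sqrt 2 * ξ ^ (n - 1) := by
  have h2 : 2 ≤ ξ ^ (n - 2) := hξ.trans (le_self_pow₀ (by linarith) (by omega))
  refine mul_le_mul_of_nonneg_right (Real.sqrt_le_sqrt ?_) (by positivity)
  rw [div_le_iff₀ (by linarith)]
  linarith

theorem integral_schDensity_le {b : ℝ} (hb : 2 ≤ b) :
    ∫ ξ in (1 : ℝ)..b, schDensity n ξ
      ≤ ((∫ ξ in (1 : ℝ)..2, schDensity n ξ) + Real.sqrt 2) * b ^ n := by
  have hint := intervalIntegrable_schDensity hn (by linarith : (1 : ℝ) ≤ b)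
  have h12 : IntervalIntegrable (schDensity n) volume 1 2 :=
    hint.mono_set (uIcc_subset_uIcc left_mem_uIcc (mem_uIcc_of_le one_le_two hb))
  have h2b : IntervalIntegrable (schDensity n) volume 2 b := h12.symm.trans hint
  have htail : ∫ ξ in (2 : ℝ)..b, schDensity n ξ ≤ Real.sqrt 2 * b ^ n :=
    calc ∫ ξ in (2 : ℝ)..b, schDensity n ξ
        ≤ ∫ _ in (2 : ℝ)..b, Real.sqrt 2 * b ^ (n - 1) :=
          intervalIntegral.integral_mono_on hb h2b intervalIntegrable_const fun ξ hξ =>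
            (schDensity_le_sqrt_two_mul hn hξ.1).trans (by
              gcongr; · linarith [hξ.1]
              exact hξ.2)
      _ = (b - 2) * (Real.sqrt 2 * b ^ (n - 1)) := by
          rw [intervalIntegral.integral_const, smul_eq_mul]
      _ ≤ b * (Real.sqrt 2 * b ^ (n - 1)) := by gcongr; linarith
      _ = Real.sqrt 2 * b ^ n := by rw [← pow_sub_one_mul (by omega : n ≠ 0)]; ring
  have hhead : ∫ ξ in (1 : ℝ)..2, schDensity n ξ ≤ (∫ ξ in (1 : ℝ)..2, schDensity n ξ) * b ^ n :=
    le_mul_of_one_le_right (intervalIntegral.integral_nonneg one_le_two fun ξ hξ =>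
      schDensity_nonneg n (by linarith [hξ.1])) (one_le_pow₀ (by linarith))
  rw [← intervalIntegral.integral_add_adjacent_intervals h12 h2b]
  linarith

theorem tendsto_sq_mul_integral_schDensity {g : ℝ → ℝ}
    (hlim : Tendsto (fun r : ℝ => g r ^ 2 * r ^ n) atTop (𝓝 0)) :
    Tendsto (fun r => g r ^ 2 * ∫ ξ in (1 : ℝ)..r, schDensity n ξ) atTop (𝓝 0) := by
  set C := (∫ ξ in (1 : ℝ)..2, schDensity n ξ) + Real.sqrt 2
  refine squeeze_zero' ?_ ?_ (by simpa using hlim.const_mul C)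
  · filter_upwards [eventually_ge_atTop 1] with r hr
    exact mul_nonneg (sq_nonneg _) (intervalIntegral.integral_nonneg hr fun ξ hξ =>
      schDensity_nonneg n (by linarith [hξ.1]))
  · filter_upwards [eventually_ge_atTop 2] with r hr
    calc g r ^ 2 * ∫ ξ in (1 : ℝ)..r, schDensity n ξ ≤ g r ^ 2 * (C * r ^ n) := by
          gcongr; exact integral_schDensity_le hn hr
      _ = C * (g r ^ 2 * r ^ n) := by ring

theorem sqrt_mul_sqrt_weights_eq_pow {r : ℝ} (hr : 1 < r) :
    Real.sqrt (r ^ (n - 1) * Real.sqrt (r ^ (n - 2) / (r ^ (n - 2) - 1)))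
      * Real.sqrt (r ^ (n - 1) * Real.sqrt ((r ^ (n - 2) - 1) / r ^ (n - 2))) = r ^ (n - 1) := by
  have hm : 0 < r ^ (n - 2) - 1 := sub_pos.mpr (one_lt_pow₀ hr (by omega))
  have hp : 0 < r ^ (n - 1) := by positivity
  have hw : r ^ (n - 2) / (r ^ (n - 2) - 1) * ((r ^ (n - 2) - 1) / r ^ (n - 2)) = 1 := by
    field_simp
  rw [← Real.sqrt_mul (by positivity), mul_mul_mul_comm, ← Real.sqrt_mul (by positivity), hw,
    Real.sqrt_one, mul_one, Real.sqrt_mul_self hp.le]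

theorem abs_mul_mul_integral_schDensity_eq {r : ℝ} (hr : 1 < r) (x y : ℝ) :
    |x * y| * ∫ ξ in (1 : ℝ)..r, schDensity n ξ
      = |x * schS n r * Real.sqrt (r ^ (n - 1) * Real.sqrt (r ^ (n - 2) / (r ^ (n - 2) - 1)))|
        * |y * Real.sqrt (r ^ (n - 1) * Real.sqrt ((r ^ (n - 2) - 1) / r ^ (n - 2)))| := by
  have hp : 0 < r ^ (n - 1) := by positivity
  have hschS : 0 ≤ schS n r := div_nonneg (intervalIntegral.integral_nonneg hr.le fun ξ hξ =>
    schDensity_nonneg n (by linarith [hξ.1])) hp.le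
  have hS : ∫ ξ in (1 : ℝ)..r, schDensity n ξ = schS n r * r ^ (n - 1) :=
    (div_mul_cancel₀ _ hp.ne').symm
  have hw := sqrt_mul_sqrt_weights_eq_pow hn hr
  set w₁ := Real.sqrt (r ^ (n - 1) * Real.sqrt (r ^ (n - 2) / (r ^ (n - 2) - 1)))
  set w₂ := Real.sqrt (r ^ (n - 1) * Real.sqrt ((r ^ (n - 2) - 1) / r ^ (n - 2)))
  rw [hS, ← hw, abs_mul, abs_mul, abs_mul, abs_mul, abs_of_nonneg hschS,
    abs_of_nonneg (Real.sqrt_nonneg _ : 0 ≤ w₁), abs_of_nonneg (Real.sqrt_nonneg _ : 0 ≤ w₂)]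
  ring

theorem lintegral_abs_mul_deriv_mul_integral_schDensity_le {g : ℝ → ℝ}
    (hg : AEMeasurable g (volume.restrict (Ioi 1))) :
    ∫⁻ r in Ioi (1 : ℝ), ENNReal.ofReal (|g r * deriv g r| * ∫ ξ in (1 : ℝ)..r, schDensity n ξ)
      ≤ (∫⁻ r in Ioi (1 : ℝ), ENNReal.ofReal (schS n r ^ 2 * g r ^ 2 * r ^ (n - 1)
            * Real.sqrt (r ^ (n - 2) / (r ^ (n - 2) - 1)))) ^ ((1 : ℝ) / 2) *
        (∫⁻ r in Ioi (1 : ℝ), ENNReal.ofReal (deriv g r ^ 2 * r ^ (n - 1)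
            * Real.sqrt ((r ^ (n - 2) - 1) / r ^ (n - 2)))) ^ ((1 : ℝ) / 2) := by
  set w₁ : ℝ → ℝ := fun r => Real.sqrt (r ^ (n - 1) * Real.sqrt (r ^ (n - 2) / (r ^ (n - 2) - 1)))
  set w₂ : ℝ → ℝ := fun r => Real.sqrt (r ^ (n - 1) * Real.sqrt ((r ^ (n - 2) - 1) / r ^ (n - 2)))
  have hS_cont : ContinuousOn (fun r => ∫ ξ in (1 : ℝ)..r, schDensity n ξ) (Ioi 1) :=
    AbsolutelyContinuousOnInterval.continuousOn_Ioi fun a b ha hab =>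
      (intervalIntegrable_schDensity hn (ha.le.trans hab)).absolutelyContinuousOnInterval_primitive
        ha.le hab
  have hschS_cont : ContinuousOn (schS n) (Ioi 1) :=
    hS_cont.div (continuousOn_pow _) fun r hr => pow_ne_zero _ (by linarith [hr.out])
  have hu : AEMeasurable (fun r => g r * schS n r * w₁ r) (volume.restrict (Ioi 1)) :=
    (hg.mul (hschS_cont.aemeasurable measurableSet_Ioi)).mul (by fun_prop)
  have hv : AEMeasurable (fun r => deriv g r * w₂ r) (volume.restrict (Ioi 1)) :=
    ((measurable_deriv g).mul (by fun_prop)).aemeasurable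
  have hu_sq : ∀ r ∈ Ioi (1 : ℝ), (g r * schS n r * w₁ r) ^ 2
      = schS n r ^ 2 * g r ^ 2 * r ^ (n - 1) * Real.sqrt (r ^ (n - 2) / (r ^ (n - 2) - 1)) :=
    fun r hr => by
      have hr : 0 < r := lt_trans one_pos hr
      rw [mul_pow, mul_pow, Real.sq_sqrt (by positivity)]; ring
  have hv_sq : ∀ r ∈ Ioi (1 : ℝ), (deriv g r * w₂ r) ^ 2
      = deriv g r ^ 2 * r ^ (n - 1) * Real.sqrt ((r ^ (n - 2) - 1) / r ^ (n - 2)) :=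
    fun r hr => by
      have hr : 0 < r := lt_trans one_pos hr
      rw [mul_pow, Real.sq_sqrt (by positivity)]; ring
  calc _ = ∫⁻ r in Ioi (1 : ℝ), ENNReal.ofReal (|g r * schS n r * w₁ r| * |deriv g r * w₂ r|) :=
        setLIntegral_congr_fun measurableSet_Ioi fun r hr => by
          rw [abs_mul_mul_integral_schDensity_eq hn hr]
    _ ≤ _ := lintegral_ofReal_abs_mul_abs_le hu hv
    _ = _ := by
        congr 2
        · exact setLIntegral_congr_fun measurableSet_Ioi fun r hr => by rw [hu_sq r hr]
        · exact setLIntegral_congr_fun measurableSet_Ioi fun r hr => by rw [hv_sq r hr]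

end

/-- the radial Heisenberg inequality in the presence of a Schwarzschild black
hole. If `g : (1,∞) → ℝ` is locally absolutely continuous (encoded by the fundamental
theorem of calculus characterization) with `g(r)² rⁿ → 0` as `r → ∞`, then
`(1/2) ∫₁^∞ g² r^(n−1) √(r^(n−2)/(r^(n−2)−1)) dr
  ≤ (∫₁^∞ s² g² r^(n−1) √(r^(n−2)/(r^(n−2)−1)) dr)^(1/2)
    (∫₁^∞ g'² r^(n−1) √((r^(n−2)−1)/r^(n−2)) dr)^(1/2)`. -/
theorem schwarzschild_heisenberg_radial (n : ℕ) (hn : 3 ≤ n) (g : ℝ → ℝ)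
    (hAC : ∀ a b : ℝ, 1 < a → a ≤ b →
      MeasureTheory.IntegrableOn (deriv g) (Set.Icc a b) ∧
      ∀ x ∈ Set.Icc a b, g x = g a + ∫ t in a..x, deriv g t)
    (hlim : Filter.Tendsto (fun r : ℝ => g r ^ 2 * r ^ n) Filter.atTop (nhds 0)) :
    ENNReal.ofReal ((1 : ℝ) / 2) *
        ∫⁻ r in Set.Ioi (1 : ℝ),
          ENNReal.ofReal (g r ^ 2 * r ^ (n - 1)
            * Real.sqrt (r ^ (n - 2) / (r ^ (n - 2) - 1)))
      ≤ (∫⁻ r in Set.Ioi (1 : ℝ),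
            ENNReal.ofReal (schS n r ^ 2 * g r ^ 2 * r ^ (n - 1)
              * Real.sqrt (r ^ (n - 2) / (r ^ (n - 2) - 1)))) ^ ((1 : ℝ) / 2) *
        (∫⁻ r in Set.Ioi (1 : ℝ),
            ENNReal.ofReal (deriv g r ^ 2 * r ^ (n - 1)
              * Real.sqrt ((r ^ (n - 2) - 1) / r ^ (n - 2)))) ^ ((1 : ℝ) / 2) := by
  have hg : ∀ a b, 1 < a → a ≤ b → AbsolutelyContinuousOnInterval g a b := fun a b ha hab =>
    .of_eq_add_integral hab (hAC a b ha hab).1 (hAC a b ha hab).2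
  have hhardy := lintegral_sq_mul_le_two_mul_lintegral
    (fun x hx => schDensity_nonneg n (zero_lt_one.trans hx).le)
    (fun b hb => intervalIntegrable_schDensity hn hb.le) hg
    (tendsto_sq_mul_integral_schDensity hn hlim)
  have hcs := lintegral_abs_mul_deriv_mul_integral_schDensity_le hn
    ((AbsolutelyContinuousOnInterval.continuousOn_Ioi hg).aemeasurable measurableSet_Ioi)
  have hhalf : ENNReal.ofReal (1 / 2) * 2 = 1 := by
    rw [one_div, ENNReal.ofReal_inv_of_pos two_pos, ENNReal.ofReal_ofNat,
      ENNReal.inv_mul_cancel two_ne_zero ENNReal.ofNat_ne_top]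
  calc _ = ENNReal.ofReal (1 / 2)
          * ∫⁻ r in Ioi (1 : ℝ), ENNReal.ofReal (g r ^ 2 * schDensity n r) := by
        simp only [schDensity, mul_assoc, mul_comm (Real.sqrt _)]
    _ ≤ ENNReal.ofReal (1 / 2) * (2 * ∫⁻ r in Ioi (1 : ℝ),
          ENNReal.ofReal (|g r * deriv g r| * ∫ ξ in (1 : ℝ)..r, schDensity n ξ)) := by
        gcongr
    _ ≤ _ := by rwa [← mul_assoc, hhalf, one_mul]
end
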